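/- arXiv:0809.1872 — 14 statements merged into one kernel-verified Lean document; each statement's English description precedes it below -/
import Mathlib

section
/- Let X be a Baire metric space. Then dis(X) ≥ Δ(X); that is, X cannot be covered by fewer than Δ(X) discrete subspaces, where Δ(X) is the least cardinality of a non-empty open subset of X. -/
open Set Cardinal TopologicalSpace

/-- A subset `s` of a topological space is discrete (as a subspace) iff every point of `s`
has an open neighbourhood in the ambient space meeting `s` only in that point. -/
def IsDiscreteSubset {X : Type*} [TopologicalSpace X] (s : Set X) : Prop :=
  ∀ x ∈ s, ∃ U : Set X, IsOpen U ∧ U ∩ s = {x}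

/-- `dis X`: the least cardinality of a family of discrete subsets covering `X`. -/
noncomputable def dis (X : Type*) [TopologicalSpace X] : Cardinal :=
  sInf {c : Cardinal | ∃ 𝒟 : Set (Set X), #𝒟 = c ∧ (∀ D ∈ 𝒟, IsDiscreteSubset D) ∧
    ⋃₀ 𝒟 = Set.univ}

/-- `Delta X`: the dispersion character, i.e. the least cardinality of a nonempty open set. -/
noncomputable def Delta (X : Type*) [TopologicalSpace X] : Cardinal :=
  sInf {c : Cardinal | ∃ U : Set X, IsOpen U ∧ U.Nonempty ∧ #U = c}

/-!
Fix a cover `𝒟` of `X` by discrete sets, and give each point `x` a set `D x ∈ 𝒟` containing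
it and a radius `r x > 0` such that the ball of radius `r x` about `x` meets `D x` only in `x`.
By the Baire property some set `A = {x | ε < r x}` is dense in a ball `B` of radius `≤ ε / 2`.
On `S = A ∩ B` the map `D` is injective, so `#S ≤ #𝒟`; and a point `x ∈ B` is determined by
`D x` together with any point of `S` within `r x / 2` of it, so `#B ≤ #𝒟 * #S ≤ #𝒟`
(when `𝒟` is finite, `S` is finite and dense in `B`, so `B ⊆ S`).
-/

theorem Delta_le_mk {X : Type*} [TopologicalSpace X] {U : Set X} (hU : IsOpen U)
    (hne : U.Nonempty) : Delta X ≤ #U :=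
  csInf_le' ⟨U, hU, hne, rfl⟩

theorem Delta_eq_zero_of_isEmpty (X : Type*) [TopologicalSpace X] [IsEmpty X] :
    Delta X = 0 := by
  have : {c : Cardinal | ∃ U : Set X, IsOpen U ∧ U.Nonempty ∧ #U = c} = ∅ :=
    eq_empty_of_forall_notMem fun _ ⟨_, _, ⟨x, _⟩, _⟩ => isEmptyElim x
  rw [Delta, this, Cardinal.sInf_empty]

theorem exists_discrete_cover_mk_eq_dis (X : Type*) [TopologicalSpace X] :
    ∃ 𝒟 : Set (Set X), #𝒟 = dis X ∧ (∀ D ∈ 𝒟, IsDiscreteSubset D) ∧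
      ⋃₀ 𝒟 = Set.univ := by
  refine csInf_mem (s := {c | ∃ 𝒟 : Set (Set X), #𝒟 = c ∧
    (∀ D ∈ 𝒟, IsDiscreteSubset D) ∧ ⋃₀ 𝒟 = Set.univ})
    ⟨_, range fun x : X => ({x} : Set X), rfl, ?_, ?_⟩
  · rintro _ ⟨x, rfl⟩ _ rfl
    exact ⟨Set.univ, isOpen_univ, univ_inter _⟩
  · exact sUnion_eq_univ_iff.2 fun x => ⟨{x}, mem_range_self x, rfl⟩

theorem IsDiscreteSubset.exists_pos_radius {X : Type*} [PseudoMetricSpace X] {s : Set X}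
    (hs : IsDiscreteSubset s) {x : X} (hx : x ∈ s) :
    ∃ r > 0, ∀ y ∈ s, dist x y < r → y = x := by
  obtain ⟨U, hUo, hU⟩ := hs x hx
  have hxU : x ∈ U := (hU.symm ▸ mem_singleton x : x ∈ U ∩ s).1
  obtain ⟨r, hr, hball⟩ := Metric.isOpen_iff.1 hUo x hxU
  refine ⟨r, hr, fun y hy hxy => ?_⟩
  have : y ∈ U ∩ s := ⟨hball (Metric.mem_ball'.2 hxy), hy⟩
  rwa [hU] at this

theorem exists_pos_nonempty_interior_closure_lt {X : Type*} [TopologicalSpace X]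
    [BaireSpace X] [Nonempty X] {f : X → ℝ} (hf : ∀ x, 0 < f x) :
    ∃ ε > 0, (interior (closure {x | ε < f x})).Nonempty := by
  have hcover : ⋃ n : ℕ, closure {x | 1 / ((n : ℝ) + 1) < f x} = Set.univ :=
    iUnion_eq_univ_iff.2 fun x =>
      (exists_nat_one_div_lt (hf x)).imp fun _ hn => subset_closure hn
  obtain ⟨n, hn⟩ := nonempty_interior_of_iUnion_of_closed (fun _ => isClosed_closure) hcover
  exact ⟨_, Nat.one_div_pos_of_nat, hn⟩

section SeparatingRadius

variable {X ι : Type*} [PseudoMetricSpace X] {D : X → ι} {r : X → ℝ}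

theorem injOn_of_dist_lt_radius (hsep : ∀ x y, D x = D y → dist x y < r x → y = x)
    {S : Set X} (hS : ∀ s ∈ S, ∀ t ∈ S, dist s t < r s) : InjOn D S :=
  fun s hs t ht hst => (hsep s t hst (hS s hs t ht)).symm

theorem eq_of_dist_lt_half_radius (hsep : ∀ x y, D x = D y → dist x y < r x → y = x)
    {x y z : X} (hD : D x = D y) (hx : dist x z < r x / 2) (hy : dist y z < r y / 2) :
    x = y := by
  wlog hr : r x ≤ r y generalizing x y
  · exact (this hD.symm hy hx (le_of_not_ge hr)).symm
  have : dist y x < r y := by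
    calc dist y x ≤ dist y z + dist x z := dist_triangle_right y x z
      _ < r y / 2 + r x / 2 := add_lt_add hy hx
      _ ≤ r y := by linarith
  exact hsep y x hD.symm this

end SeparatingRadius

universe u

theorem mk_le_of_subset_closure_of_dist_lt_radius {X ι : Type u} [MetricSpace X]
    {D : X → ι} {r : X → ℝ} (hr : ∀ x, 0 < r x)
    (hsep : ∀ x y, D x = D y → dist x y < r x → y = x) {S B : Set X}
    (hS : ∀ s ∈ S, ∀ t ∈ S, dist s t < r s) (hB : B ⊆ closure S) : #B ≤ #ι := by
  have hSι : #S ≤ #ι := mk_le_of_injective (injOn_of_dist_lt_radius hsep hS).injective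
  by_cases hinf : ℵ₀ ≤ #ι
  · have hnear : ∀ x : B, ∃ s : S, dist (x : X) s < r x / 2 := fun ⟨x, hx⟩ =>
      let ⟨s, hs, hxs⟩ := Metric.mem_closure_iff.1 (hB hx) _ (half_pos (hr x))
      ⟨⟨s, hs⟩, hxs⟩
    choose f hf using hnear
    have hinj : Function.Injective fun x : B => (D x, f x) := fun x y hxy => by
      obtain ⟨hD, hfxy⟩ := Prod.mk.inj hxy
      exact Subtype.ext <| eq_of_dist_lt_half_radius hsep hD (hf x) (hfxy ▸ hf y)
    calc #B ≤ #ι * #S := by simpa only [mk_prod, lift_id] using mk_le_of_injective hinj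
      _ ≤ #ι * #ι := mul_le_mul_right hSι _
      _ = #ι := mul_eq_self hinf
  · have hSfin : S.Finite := lt_aleph0_iff_set_finite.1 (hSι.trans_lt (not_le.1 hinf))
    exact (mk_le_mk_of_subset (hSfin.isClosed.closure_eq ▸ hB)).trans hSι

theorem exists_isOpen_mk_le_of_discrete_cover {X : Type u} [MetricSpace X] [BaireSpace X]
    [Nonempty X] {𝒟 : Set (Set X)} (hdisc : ∀ D ∈ 𝒟, IsDiscreteSubset D)
    (hcover : ⋃₀ 𝒟 = Set.univ) :
    ∃ U : Set X, IsOpen U ∧ U.Nonempty ∧ #U ≤ #𝒟 := by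
  have hsep : ∀ x : X, ∃ D : 𝒟, x ∈ (D : Set X) ∧
      ∃ r > 0, ∀ y ∈ (D : Set X), dist x y < r → y = x := fun x =>
    let ⟨D, hD, hxD⟩ := sUnion_eq_univ_iff.1 hcover x
    ⟨⟨D, hD⟩, hxD, (hdisc D hD).exists_pos_radius hxD⟩
  choose D hxD r hr hD using hsep
  obtain ⟨ε, hε, x₀, hx₀⟩ := exists_pos_nonempty_interior_closure_lt hr
  obtain ⟨δ, hδ, hball⟩ := Metric.isOpen_iff.1 isOpen_interior x₀ hx₀
  set B := Metric.ball x₀ (min δ (ε / 2))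
  set S := B ∩ {x | ε < r x}
  have hS : ∀ s ∈ S, ∀ t ∈ S, dist s t < r s := fun s hs t ht =>
    calc dist s t ≤ dist s x₀ + dist t x₀ := dist_triangle_right s t x₀
      _ < min δ (ε / 2) + min δ (ε / 2) := add_lt_add hs.1 ht.1
      _ ≤ ε := by linarith [min_le_right δ (ε / 2)]
      _ < r s := hs.2
  have hBS : B ⊆ closure S := fun x hx =>
    Metric.isOpen_ball.inter_closure
      ⟨hx, interior_subset (hball (Metric.ball_subset_ball (min_le_left _ _) hx))⟩
  refine ⟨B, Metric.isOpen_ball, Metric.nonempty_ball.2 (lt_min hδ (half_pos hε)), ?_⟩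
  exact mk_le_of_subset_closure_of_dist_lt_radius (D := D) hr
    (fun x y hxy hd => hD x y (hxy ▸ hxD y) hd) hS hBS

theorem statement1 (X : Type*) [MetricSpace X] [BaireSpace X] :
    Delta X ≤ dis X := by
  rcases isEmpty_or_nonempty X with _ | _
  · rw [Delta_eq_zero_of_isEmpty]
    exact zero_le
  obtain ⟨𝒟, hcard, hdisc, hcover⟩ := exists_discrete_cover_mk_eq_dis X
  obtain ⟨U, hU, hne, hle⟩ := exists_isOpen_mk_le_of_discrete_cover hdisc hcover
  exact (Delta_le_mk hU hne).trans (hcard ▸ hle)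
end

section
/- Let X be a Baire developable Hausdorff space that is ω₁-expandable. Then dis(X) ≥ Δ(X). -/
open Set Cardinal TopologicalSpace

/-- The star of a point `x` with respect to a collection `𝒢`: the union of all members of `𝒢`
containing `x`. -/
def st {X : Type*} [TopologicalSpace X] (x : X) (𝒢 : Set (Set X)) : Set X :=
  ⋃₀ {G ∈ 𝒢 | x ∈ G}

/-- A development for `X`: a sequence of open covers such that the stars at each point form a
neighbourhood base there. -/
def IsDevelopment {X : Type*} [TopologicalSpace X] (G : ℕ → Set (Set X)) : Prop :=
  (∀ n, ∀ U ∈ G n, IsOpen U) ∧ (∀ n, ⋃₀ (G n) = Set.univ) ∧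
  (∀ (x : X) (V : Set X), IsOpen V → x ∈ V → ∃ n, st x (G n) ⊆ V)

/-- `X` is `κ`-expandable: every closed discrete set `D` expands to a family of open sets
`{U d : d ∈ D}`, `d ∈ U d`, such that every point of `X` lies in at most `κ` of the `U d`. -/
def Expandable (X : Type*) [TopologicalSpace X] (κ : Cardinal) : Prop :=
  ∀ D : Set X, IsClosed D → IsDiscreteSubset D →
    ∃ U : X → Set X, (∀ d ∈ D, d ∈ U d ∧ IsOpen (U d)) ∧
      ∀ y : X, #{d : D | y ∈ U (d : X)} ≤ κ

lemma mk_le_mul_of_fibers {α β : Type u} (f : α → β) (c : Cardinal.{u})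
    (h : ∀ b : β, #(f ⁻¹' {b}) ≤ c) : #α ≤ #β * c :=
  calc #α = #(Σ b : β, f ⁻¹' {b}) := Cardinal.mk_congr (Equiv.sigmaFiberEquiv f).symm
    _ = Cardinal.sum (fun b : β => #(f ⁻¹' {b})) := Cardinal.mk_sigma _
    _ ≤ Cardinal.sum (fun _ : β => c) := Cardinal.sum_le_sum _ _ h
    _ = #β * c := Cardinal.sum_const' _ _

theorem statement2 (X : Type*) [TopologicalSpace X] [T2Space X] [BaireSpace X]
    (G : ℕ → Set (Set X)) (hG : IsDevelopment G)
    (hexp : Expandable X (Cardinal.aleph 1)) :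
    Delta X ≤ dis X := by
  classical
  obtain ⟨hGopen, hGcov, hGbase⟩ := hG
  rcases isEmpty_or_nonempty X with hX | hX
  · have hemp : {c : Cardinal | ∃ U : Set X, IsOpen U ∧ U.Nonempty ∧ #U = c} = ∅ := by
      ext c
      simp only [mem_setOf_eq, mem_empty_iff_false, iff_false]
      rintro ⟨U, -, ⟨x, -⟩, -⟩
      exact hX.false x
    rw [Delta, hemp, Cardinal.sInf_empty]
    exact Cardinal.zero_le _
  -- the defining set of `dis` is nonempty
  have hdisne : {c : Cardinal | ∃ 𝒟 : Set (Set X), #𝒟 = c ∧ (∀ D ∈ 𝒟, IsDiscreteSubset D) ∧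
      ⋃₀ 𝒟 = Set.univ}.Nonempty := by
    refine ⟨_, Set.range (fun x : X => ({x} : Set X)), rfl, ?_, ?_⟩
    · rintro D ⟨x, rfl⟩ y hy
      simp only [mem_singleton_iff] at hy
      subst hy
      exact ⟨Set.univ, isOpen_univ, by rw [Set.univ_inter]⟩
    · ext x
      simp only [mem_sUnion, Set.mem_univ, iff_true]
      exact ⟨{x}, ⟨x, rfl⟩, rfl⟩
  obtain ⟨𝒟, h𝒟card, h𝒟disc, h𝒟cover⟩ := csInf_mem hdisne
  have h𝒟card : #𝒟 = dis X := h𝒟card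
  have h𝒟ne : Nonempty ↥𝒟 := by
    obtain ⟨x⟩ := hX
    have : x ∈ ⋃₀ 𝒟 := h𝒟cover ▸ Set.mem_univ x
    obtain ⟨D, hD, -⟩ := this
    exact ⟨⟨D, hD⟩⟩
  -- the pieces
  set F : Set X → ℕ → Set X := fun D n => {x | x ∈ D ∧ st x (G n) ∩ D ⊆ {x}} with hF
  -- every member of `G n` meets `F D n` in at most one point
  have hsep : ∀ (D : Set X) (n : ℕ), ∀ g ∈ G n,
      ∀ x ∈ g ∩ F D n, ∀ y ∈ g ∩ F D n, x = y := by
    rintro D n g hg x ⟨hxg, hxD, hxst⟩ y ⟨hyg, hyD, -⟩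
    have : y ∈ st x (G n) ∩ D := ⟨⟨g, ⟨hg, hxg⟩, hyg⟩, hyD⟩
    exact (hxst this).symm
  -- choose a member of `G n` containing any given point
  have hGmem : ∀ (n : ℕ) (z : X), ∃ g ∈ G n, z ∈ g := by
    intro n z
    have : z ∈ ⋃₀ (G n) := by rw [hGcov n]; trivial
    exact this
  -- `F D n` is closed
  have hFclosed : ∀ (D : Set X) (n : ℕ), IsClosed (F D n) := by
    intro D n
    rw [← isOpen_compl_iff, isOpen_iff_forall_mem_open]
    intro z hz
    obtain ⟨g, hg, hzg⟩ := hGmem n z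
    by_cases hgi : (g ∩ F D n).Nonempty
    · obtain ⟨w, hw⟩ := hgi
      have hwz : w ≠ z := fun h => hz (h ▸ hw.2)
      refine ⟨g ∩ {w}ᶜ, ?_, (hGopen n g hg).inter isOpen_compl_singleton,
        hzg, fun h => hwz (mem_singleton_iff.1 h).symm⟩
      intro u hu huF
      exact hu.2 (mem_singleton_iff.2 (hsep D n g hg u ⟨hu.1, huF⟩ w hw))
    · exact ⟨g, fun u hu huF => hgi ⟨u, hu, huF⟩, hGopen n g hg, hzg⟩
  -- `F D n` is discrete
  have hFdisc : ∀ (D : Set X) (n : ℕ), IsDiscreteSubset (F D n) := by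
    intro D n x hx
    obtain ⟨g, hg, hxg⟩ := hGmem n x
    refine ⟨g, hGopen n g hg, ?_⟩
    apply Subset.antisymm
    · intro y hy
      exact mem_singleton_iff.2 (hsep D n g hg y hy x ⟨hxg, hx⟩)
    · rintro y rfl
      exact ⟨hxg, hx⟩
  -- every `D ∈ 𝒟` is the union of its pieces
  have hdecomp : ∀ D ∈ 𝒟, D ⊆ ⋃ n, F D n := by
    intro D hD x hx
    obtain ⟨U, hU, hUD⟩ := h𝒟disc D hD x hx
    have hxU : x ∈ U := by
      have hxx : x ∈ ({x} : Set X) := rfl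
      rw [← hUD] at hxx
      exact hxx.1
    obtain ⟨n, hn⟩ := hGbase x U hU hxU
    exact mem_iUnion.2 ⟨n, hx, fun y hy => by rw [← hUD]; exact ⟨hn hy.1, hy.2⟩⟩
  -- the pieces cover X
  have hcover : (⋃ p : ↥𝒟 × ℕ, F (p.1 : Set X) p.2) = Set.univ := by
    ext x
    simp only [mem_iUnion, Set.mem_univ, iff_true]
    have : x ∈ ⋃₀ 𝒟 := h𝒟cover ▸ Set.mem_univ x
    obtain ⟨D, hD, hxD⟩ := this
    obtain ⟨n, hn1, hn2⟩ := mem_iUnion.1 (hdecomp D hD hxD)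
    exact ⟨⟨⟨D, hD⟩, n⟩, hn1, hn2⟩
  by_cases hsing : ∃ z : X, IsOpen ({z} : Set X)
  · -- there is an open singleton: Delta ≤ 1 ≤ dis X
    obtain ⟨z, hz⟩ := hsing
    have h1 : Delta X ≤ 1 := csInf_le' ⟨{z}, hz, ⟨z, rfl⟩, Cardinal.mk_singleton z⟩
    refine h1.trans ?_
    apply le_csInf hdisne
    rintro c ⟨𝒟', hc, -, hcov'⟩
    rw [Cardinal.one_le_iff_ne_zero]
    rintro rfl
    rw [Cardinal.mk_eq_zero_iff] at hc
    obtain ⟨x⟩ := hX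
    have : x ∈ ⋃₀ 𝒟' := hcov' ▸ Set.mem_univ x
    obtain ⟨D, hD, -⟩ := this
    exact hc.elim' ⟨D, hD⟩
  -- no open singletons
  push_neg at hsing
  -- pieces have empty interior
  have hFint : ∀ (D : Set X) (n : ℕ), interior (F D n) = ∅ := by
    intro D n
    rw [eq_empty_iff_forall_notMem]
    intro z hz
    obtain ⟨g, hg, hzg⟩ := hGmem n z
    apply hsing z
    have hzeq : interior (F D n) ∩ g = {z} := by
      apply Subset.antisymm
      · intro u hu
        exact mem_singleton_iff.2
          (hsep D n g hg u ⟨hu.2, interior_subset hu.1⟩ z ⟨hzg, interior_subset hz⟩)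
      · rintro y rfl
        exact ⟨hz, hzg⟩
    rw [← hzeq]
    exact isOpen_interior.inter (hGopen n g hg)
  -- dis X is uncountable
  have haleph : Cardinal.aleph 1 ≤ dis X := by
    have h1 : (Cardinal.aleph 1 : Cardinal) = Order.succ ℵ₀ := Cardinal.succ_aleph0.symm
    rw [h1, Order.succ_le_iff]
    by_contra hle
    push_neg at hle
    rw [← h𝒟card] at hle
    have hcnt : Countable ↥𝒟 := Cardinal.mk_le_aleph0_iff.1 hle
    obtain ⟨p, z, hz⟩ := nonempty_interior_of_iUnion_of_closed
      (f := fun p : ↥𝒟 × ℕ => F (p.1 : Set X) p.2) (fun p => hFclosed _ _) hcover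
    rw [hFint] at hz
    exact hz
  have haleph0 : ℵ₀ ≤ dis X := (Cardinal.aleph0_le_aleph 1).trans haleph
  -- Baire: some X_n is somewhere dense
  set Xn : ℕ → Set X := fun n => ⋃ D : ↥𝒟, F (D : Set X) n with hXn
  have hXncov : (⋃ n, closure (Xn n)) = Set.univ := by
    rw [Set.eq_univ_iff_forall]
    intro x
    have hxu : x ∈ ⋃ p : ↥𝒟 × ℕ, F (p.1 : Set X) p.2 := hcover ▸ Set.mem_univ x
    obtain ⟨⟨D, m⟩, hp⟩ := mem_iUnion.1 hxu
    exact mem_iUnion.2 ⟨m, subset_closure (mem_iUnion.2 ⟨D, hp⟩)⟩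
  obtain ⟨n, z0, hz0⟩ := nonempty_interior_of_iUnion_of_closed
    (f := fun n => closure (Xn n)) (fun n => isClosed_closure) hXncov
  set O := interior (closure (Xn n)) with hO
  obtain ⟨g, hg, hz0g⟩ := hGmem n z0
  set V := g ∩ O with hV
  have hVopen : IsOpen V := (hGopen n g hg).inter isOpen_interior
  have hVne : V.Nonempty := ⟨z0, hz0g, hz0⟩
  -- the dense subset S
  set S := V ∩ Xn n with hS
  have hScard : #S ≤ dis X := by
    have hψ : ∀ s : ↥S, ∃ D : ↥𝒟, (s : X) ∈ F (D : Set X) n := by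
      rintro ⟨s, hs1, hs2⟩
      obtain ⟨D, hD⟩ := mem_iUnion.1 hs2
      exact ⟨D, hD⟩
    choose ψ hψspec using hψ
    have hinj : Function.Injective ψ := by
      intro s t hst
      have hs := hψspec s
      have ht := hψspec t
      rw [hst] at hs
      ext
      exact hsep _ n g hg _ ⟨s.2.1.1, hs⟩ _ ⟨t.2.1.1, ht⟩
    calc #S ≤ #𝒟 := Cardinal.mk_le_of_injective hinj
      _ = dis X := h𝒟card
  -- S is dense in V
  have hSdense : ∀ (W : Set X), IsOpen W → ∀ x ∈ W ∩ V, (W ∩ V ∩ S).Nonempty := by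
    intro W hW x hx
    have hxcl : x ∈ closure (Xn n) := interior_subset hx.2.2
    obtain ⟨y, hy1, hy2⟩ := (mem_closure_iff.1 hxcl) (W ∩ V) (hW.inter hVopen) hx
    exact ⟨y, hy1, hy1.2, hy2⟩
  -- each V ∩ F D m is small
  have hpiece : ∀ (D : Set X) (m : ℕ), #(V ∩ F D m : Set X) ≤ dis X := by
    intro D m
    obtain ⟨U, hU1, hU2⟩ := hexp (F D m) (hFclosed D m) (hFdisc D m)
    have hφ : ∀ d : ↥(V ∩ F D m), ∃ s : ↥S, (s : X) ∈ U (d : X) := by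
      rintro ⟨d, hdV, hdF⟩
      obtain ⟨hdU, hUopen⟩ := hU1 d hdF
      obtain ⟨y, ⟨hyU, hyV⟩, hyS⟩ := hSdense (U d) hUopen d ⟨hdU, hdV⟩
      exact ⟨⟨y, hyS⟩, hyU⟩
    choose φ hφspec using hφ
    have hfiber : ∀ s : ↥S, #(φ ⁻¹' {s}) ≤ Cardinal.aleph 1 := by
      intro s
      have pf : ∀ e : ↥(φ ⁻¹' {s}), (s : X) ∈ U ((e : ↥(V ∩ F D m)) : X) := by
        intro e
        have h1 := hφspec (e : ↥(V ∩ F D m))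
        have h2 : φ (e : ↥(V ∩ F D m)) = s := e.2
        rw [h2] at h1
        exact h1
      have hinj2 : Function.Injective (fun e : ↥(φ ⁻¹' {s}) =>
          (⟨⟨((e : ↥(V ∩ F D m)) : X), (e : ↥(V ∩ F D m)).2.2⟩, pf e⟩ :
            {d : ↥(F D m) | (s : X) ∈ U (d : X)})) := by
        intro e1 e2 h
        have hval : ((e1 : ↥(V ∩ F D m)) : X) = ((e2 : ↥(V ∩ F D m)) : X) :=
          congrArg (fun z => ((z : ↥(F D m)) : X)) (congrArg Subtype.val h)
        exact Subtype.ext (Subtype.ext hval)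
      exact (Cardinal.mk_le_of_injective hinj2).trans (hU2 s)
    calc #(V ∩ F D m : Set X) ≤ #S * Cardinal.aleph 1 := mk_le_mul_of_fibers φ _ hfiber
      _ ≤ dis X * dis X := mul_le_mul' hScard haleph
      _ = dis X := Cardinal.mul_eq_self haleph0
  -- V is small
  have hVcard : #V ≤ dis X := by
    have hsub : V ⊆ ⋃ p : ↥𝒟 × ℕ, (V ∩ F (p.1 : Set X) p.2) := by
      intro x hx
      have hxu : x ∈ ⋃ p : ↥𝒟 × ℕ, F (p.1 : Set X) p.2 := hcover ▸ Set.mem_univ x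
      obtain ⟨p, hp⟩ := mem_iUnion.1 hxu
      exact mem_iUnion.2 ⟨p, hx, hp⟩
    have hidx : #(↥𝒟 × ℕ) ≤ dis X := by
      have hprod : #(↥𝒟 × ℕ) = #𝒟 * ℵ₀ := by
        simp [Cardinal.mk_prod, Cardinal.mk_nat]
      rw [hprod, h𝒟card]
      exact le_of_eq (Cardinal.mul_aleph0_eq haleph0)
    calc #V ≤ #(⋃ p : ↥𝒟 × ℕ, (V ∩ F (p.1 : Set X) p.2) : Set X) :=
        Cardinal.mk_le_mk_of_subset hsub
      _ ≤ #(↥𝒟 × ℕ) * ⨆ p : ↥𝒟 × ℕ, #(V ∩ F (p.1 : Set X) p.2 : Set X) :=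
        Cardinal.mk_iUnion_le _
      _ ≤ dis X * dis X := mul_le_mul' hidx (ciSup_le fun p => hpiece _ _)
      _ = dis X := Cardinal.mul_eq_self haleph0
  have hmem : #V ∈ {c : Cardinal | ∃ U : Set X, IsOpen U ∧ U.Nonempty ∧ #U = c} :=
    ⟨V, hVopen, hVne, rfl⟩
  exact (csInf_le' hmem).trans hVcard
end

section
/- Every regular Baire σ-space has a dense metrizable G_δ subspace. -/
/-! Let `𝒩 = ⋃ n, 𝒩 n` be a σ-discrete network. For each `n` the frontiers of the closures of the
members of `𝒩 n` form a discrete family of closed nowhere dense sets, so their union is closed and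
nowhere dense; by the Baire property the points `M` avoiding all these frontiers form a dense `G_δ`.
At a point of `M`, the set of members of `𝒩 n` whose closure contains it is locally constant, and by
regularity these countably many locally constant maps determine the topology of `M`. Hence `M`
embeds into a countable product of discrete spaces, which is metrizable. -/

open Set Cardinal TopologicalSpace

/-- A family `𝒩` of subsets is discrete if every point has an open neighbourhood meeting at
most one member of `𝒩`. -/
def IsDiscreteFamily {X : Type*} [TopologicalSpace X] (𝒩 : Set (Set X)) : Prop :=
  ∀ x : X, ∃ U : Set X, IsOpen U ∧ x ∈ U ∧ {N | N ∈ 𝒩 ∧ (U ∩ N).Nonempty}.Subsingleton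

/-- A network: for every open `U` and `x ∈ U` there is a member `N` with `x ∈ N ⊆ U`. -/
def IsNetwork {X : Type*} [TopologicalSpace X] (𝒩 : Set (Set X)) : Prop :=
  ∀ U : Set X, IsOpen U → ∀ x ∈ U, ∃ N ∈ 𝒩, x ∈ N ∧ N ⊆ U

/-- `X` has a σ-discrete network. -/
def HasSigmaDiscreteNetwork (X : Type*) [TopologicalSpace X] : Prop :=
  ∃ 𝒩 : ℕ → Set (Set X), (∀ n, IsDiscreteFamily (𝒩 n)) ∧ IsNetwork (⋃ n, 𝒩 n)

open Filter Topology

section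

variable {X : Type*} [TopologicalSpace X]

theorem eventually_mem_iff_of_notMem_frontier {s : Set X} {x : X} (hx : x ∉ frontier s) :
    ∀ᶠ y in 𝓝 x, (y ∈ s ↔ x ∈ s) := by
  by_cases hxs : x ∈ s
  · have hint : x ∈ interior s := by_contra fun h => hx ⟨subset_closure hxs, h⟩
    filter_upwards [mem_interior_iff_mem_nhds.1 hint] with y hy
    exact iff_of_true hy hxs
  · have hcl : x ∉ closure s := fun h => hx ⟨h, fun h' => hxs (interior_subset h')⟩
    filter_upwards [isClosed_closure.isOpen_compl.mem_nhds hcl] with y hy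
    exact iff_of_false (fun h => hy (subset_closure h)) hxs

theorem LocallyFinite.eventually_setOf_mem_eq {ι : Type*} {f : ι → Set X} (hf : LocallyFinite f)
    {x : X} (hx : ∀ i, x ∉ frontier (f i)) :
    ∀ᶠ y in 𝓝 x, {i | y ∈ f i} = {i | x ∈ f i} := by
  obtain ⟨t, ht, hfin⟩ := hf x
  have hagree : ∀ᶠ y in 𝓝 x, ∀ i ∈ {i | (f i ∩ t).Nonempty}, (y ∈ f i ↔ x ∈ f i) :=
    (eventually_all_finite hfin).2 fun i _ => eventually_mem_iff_of_notMem_frontier (hx i)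
  filter_upwards [hagree, ht] with y hy hyt
  ext i
  exact ⟨fun hi => (hy i ⟨y, hi, hyt⟩).1 hi, fun hi => (hy i ⟨x, hi, mem_of_mem_nhds ht⟩).2 hi⟩

theorem LocallyFinite.dense_compl_iUnion {ι : Type*} {f : ι → Set X} (hf : LocallyFinite f)
    (hc : ∀ i, IsClosed (f i)) (hi : ∀ i, interior (f i) = ∅) : Dense (⋃ i, f i)ᶜ := by
  refine dense_iff_inter_open.2 fun U hU ⟨x, hxU⟩ => ?_
  obtain ⟨t, ht, hfin⟩ := hf x
  have hdense : Dense (⋂ i ∈ {i | (f i ∩ t).Nonempty}, (f i)ᶜ) := by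
    rw [← sInter_image]
    exact (hfin.image _).dense_sInter (forall_mem_image.2 fun i _ => (hc i).isOpen_compl)
      (forall_mem_image.2 fun i _ => interior_eq_empty_iff_dense_compl.1 (hi i))
  obtain ⟨y, ⟨hyU, hyt⟩, hy⟩ := hdense.inter_open_nonempty (U ∩ interior t)
    (hU.inter isOpen_interior) ⟨x, hxU, mem_interior_iff_mem_nhds.2 ht⟩
  refine ⟨y, hyU, ?_⟩
  simp only [mem_compl_iff, mem_iUnion, not_exists]
  exact fun i hyi => mem_iInter₂.1 hy i ⟨y, hyi, interior_subset hyt⟩ hyi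

theorem IsDiscreteFamily.locallyFinite {𝒩 : Set (Set X)} (h𝒩 : IsDiscreteFamily 𝒩) :
    LocallyFinite fun N : 𝒩 => (N : Set X) := by
  intro x
  obtain ⟨U, hU, hxU, hsub⟩ := h𝒩 x
  refine ⟨U, hU.mem_nhds hxU, (hsub.finite.preimage Subtype.val_injective.injOn).subset ?_⟩
  rintro N hN
  exact ⟨N.2, by rwa [inter_comm]⟩

theorem IsNetwork.exists_closure_subset [RegularSpace X] {𝒩 : Set (Set X)} (h𝒩 : IsNetwork 𝒩)
    {x : X} {W : Set X} (hW : W ∈ 𝓝 x) : ∃ N ∈ 𝒩, x ∈ N ∧ closure N ⊆ W := by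
  obtain ⟨C, hC, hCc, hCW⟩ := exists_mem_nhds_isClosed_subset hW
  obtain ⟨N, hN, hxN, hNC⟩ :=
    h𝒩 _ isOpen_interior x (mem_interior_iff_mem_nhds.2 hC)
  exact ⟨N, hN, hxN, (closure_minimal (hNC.trans interior_subset) hCc).trans hCW⟩

theorem metrizableSpace_of_eventually_eq [T0Space X] {Z : ℕ → Type*} (φ : ∀ n, X → Z n)
    (hconst : ∀ n x, ∀ᶠ y in 𝓝 x, φ n y = φ n x)
    (hbasis : ∀ x, ∀ U ∈ 𝓝 x, ∃ n, {y | φ n y = φ n x} ⊆ U) : MetrizableSpace X := by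
  let _ : ∀ n, TopologicalSpace (Z n) := fun _ => ⊥
  have _ : ∀ n, DiscreteTopology (Z n) := fun _ => ⟨rfl⟩
  let _ := PiNat.metricSpace (E := Z)
  have hcont : Continuous fun x n => φ n x := continuous_pi fun n =>
    continuous_iff_continuousAt.2 fun x => by
      rw [ContinuousAt, nhds_discrete (Z n), tendsto_pure]
      exact hconst n x
  refine IsInducing.isEmbedding (isInducing_iff_nhds.2 fun x => le_antisymm
    (hcont.tendsto x).le_comap fun U hU => ?_) |>.metrizableSpace
  obtain ⟨n, hn⟩ := hbasis x U hU
  exact mem_comap.2 ⟨{z | z n = φ n x},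
    ((isOpen_discrete {φ n x}).preimage (continuous_apply n)).mem_nhds rfl, hn⟩

end

/-- Every regular Baire σ-space has a dense metrizable G_δ subspace. -/
theorem statement3 (X : Type*) [TopologicalSpace X] [T2Space X] [RegularSpace X] [BaireSpace X]
    (hnet : HasSigmaDiscreteNetwork X) :
    ∃ M : Set X, Dense M ∧ (∃ f : ℕ → Set X, (∀ n, IsOpen (f n)) ∧ M = ⋂ n, f n) ∧
      TopologicalSpace.MetrizableSpace M := by
  obtain ⟨𝒩, hdisc, hnet⟩ := hnet
  have hlf n : LocallyFinite fun N : 𝒩 n => closure (N : Set X) := (hdisc n).locallyFinite.closure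
  set G : ℕ → Set X := fun n => (⋃ N : 𝒩 n, frontier (closure (N : Set X)))ᶜ
  have hfr n : LocallyFinite fun N : 𝒩 n => frontier (closure (N : Set X)) :=
    (hlf n).subset fun _ => isClosed_closure.frontier_subset
  have hGo n : IsOpen (G n) :=
    ((hfr n).isClosed_iUnion fun _ => isClosed_frontier).isOpen_compl
  have hGd n : Dense (G n) :=
    (hfr n).dense_compl_iUnion (fun _ => isClosed_frontier)
      fun _ => interior_frontier isClosed_closure
  refine ⟨⋂ n, G n, dense_iInter_of_isOpen hGo hGd, ⟨G, hGo, rfl⟩, ?_⟩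
  refine metrizableSpace_of_eventually_eq (fun n (x : ⋂ n, G n) => {N : 𝒩 n | (x : X) ∈ closure N})
    (fun n x => ?_) fun x U hU => ?_
  · have hx : ∀ N : 𝒩 n, (x : X) ∉ frontier (closure (N : Set X)) := by
      simpa only [G, mem_compl_iff, mem_iUnion, not_exists] using mem_iInter.1 x.2 n
    exact continuous_subtype_val.continuousAt.eventually ((hlf n).eventually_setOf_mem_eq hx)
  · obtain ⟨W, hW, hWU⟩ := (mem_nhds_subtype _ x U).1 hU
    obtain ⟨N, hN, hxN, hNW⟩ := hnet.exists_closure_subset hW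
    obtain ⟨n, hNn⟩ := mem_iUnion.1 hN
    refine ⟨n, fun y hy => hWU (hNW ?_)⟩
    change (⟨N, hNn⟩ : 𝒩 n) ∈ {N : 𝒩 n | (y : X) ∈ closure N}
    rw [show _ = _ from hy]
    exact subset_closure hxN
end

section
/- If X is a crowded σ-space, then dis(X) = dis*(X), where dis*(X) is the least number of closed discrete sets required to cover X. -/
open Set Cardinal TopologicalSpace

/-- `disStar X`: the least cardinality of a family of closed discrete subsets covering `X`. -/
noncomputable def disStar (X : Type*) [TopologicalSpace X] : Cardinal :=
  sInf {c : Cardinal | ∃ 𝒟 : Set (Set X), #𝒟 = c ∧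
    (∀ D ∈ 𝒟, IsClosed D ∧ IsDiscreteSubset D) ∧ ⋃₀ 𝒟 = Set.univ}

/-!
Fix a σ-discrete network `⋃ₙ 𝒩ₙ`. For a discrete set `D`, choose for each `x ∈ D` an open `Uₓ`
with `Uₓ ∩ D = {x}` and let `Dₙ` be the set of those `x ∈ D` for which some `N ∈ 𝒩ₙ` satisfies
`x ∈ N ⊆ Uₓ`. A neighbourhood meeting only one member `N` of `𝒩ₙ` can meet `Dₙ` only in points
`x, y` witnessed by that same `N`, and then `x ∈ N ⊆ U_y` forces `x = y`. So every point has a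
neighbourhood meeting `Dₙ` in at most one point; hence each `Dₙ` is closed discrete and
`D = ⋃ₙ Dₙ`. This gives `dis* X ≤ dis X · ℵ₀`. In a crowded T₁ space a discrete set is nowhere
dense, so no finite family of discrete sets covers a nonempty `X`, and `dis X` is infinite.
-/

section

variable {X : Type*} [TopologicalSpace X]

lemma isDiscreteSubset_singleton (x : X) : IsDiscreteSubset ({x} : Set X) := by
  rintro y rfl
  exact ⟨univ, isOpen_univ, univ_inter _⟩

lemma isDiscreteSubset_of_forall_subsingleton_inter {s : Set X}
    (h : ∀ x ∈ s, ∃ V : Set X, IsOpen V ∧ x ∈ V ∧ (V ∩ s).Subsingleton) :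
    IsDiscreteSubset s := by
  intro x hx
  obtain ⟨V, hVo, hxV, hsub⟩ := h x hx
  exact ⟨V, hVo, hsub.eq_singleton_of_mem ⟨hxV, hx⟩⟩

lemma isClosed_of_forall_subsingleton_inter [T1Space X] {s : Set X}
    (h : ∀ x, ∃ V : Set X, IsOpen V ∧ x ∈ V ∧ (V ∩ s).Subsingleton) : IsClosed s := by
  rw [← isOpen_compl_iff, isOpen_iff_forall_mem_open]
  intro y hy
  obtain ⟨V, hVo, hyV, hsub⟩ := h y
  refine ⟨V \ (V ∩ s), fun z hz hzs => hz.2 ⟨hz.1, hzs⟩, hVo.sdiff hsub.finite.isClosed,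
    hyV, fun hys => hy hys.2⟩

lemma IsDiscreteSubset.exists_iUnion_eq_of_hasSigmaDiscreteNetwork [T1Space X]
    (hnet : HasSigmaDiscreteNetwork X) {D : Set X} (hD : IsDiscreteSubset D) :
    ∃ f : ℕ → Set X, (∀ n, IsClosed (f n) ∧ IsDiscreteSubset (f n)) ∧ ⋃ n, f n = D := by
  obtain ⟨𝒩, hdisc, hnetw⟩ := hnet
  choose! U hUo hUD using hD
  have hxU : ∀ x ∈ D, x ∈ U x := fun x hx => ((hUD x hx).superset rfl).1
  let f : ℕ → Set X := fun n => {x | x ∈ D ∧ ∃ N ∈ 𝒩 n, x ∈ N ∧ N ⊆ U x}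
  have hsub : ∀ n y, ∃ V : Set X, IsOpen V ∧ y ∈ V ∧ (V ∩ f n).Subsingleton := by
    intro n y
    obtain ⟨V, hVo, hyV, hV⟩ := hdisc n y
    refine ⟨V, hVo, hyV, ?_⟩
    rintro x₁ ⟨hx₁V, hx₁D, N₁, hN₁, hx₁N, -⟩ x₂ ⟨hx₂V, hx₂D, N₂, hN₂, hx₂N, hN₂U⟩
    have hN : N₁ = N₂ := hV ⟨hN₁, x₁, hx₁V, hx₁N⟩ ⟨hN₂, x₂, hx₂V, hx₂N⟩
    have hx₁ : x₁ ∈ U x₂ ∩ D := ⟨hN₂U (hN ▸ hx₁N), hx₁D⟩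
    rwa [hUD x₂ hx₂D] at hx₁
  refine ⟨f, fun n => ⟨isClosed_of_forall_subsingleton_inter (hsub n),
    isDiscreteSubset_of_forall_subsingleton_inter fun x _ => hsub n x⟩, ?_⟩
  refine Subset.antisymm (iUnion_subset fun n x hx => hx.1) fun x hx => ?_
  obtain ⟨N, hN, hxN, hNU⟩ := hnetw (U x) (hUo x hx) x (hxU x hx)
  obtain ⟨n, hn⟩ := mem_iUnion.1 hN
  exact mem_iUnion.2 ⟨n, hx, N, hn, hxN, hNU⟩

lemma IsNowhereDense.union {s t : Set X} (hs : IsNowhereDense s) (ht : IsNowhereDense t) :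
    IsNowhereDense (s ∪ t) := by
  rw [IsNowhereDense, closure_union,
    interior_union_isClosed_of_interior_empty isClosed_closure ht, hs]

lemma Set.Finite.isNowhereDense_sUnion {𝒟 : Set (Set X)} (h𝒟 : 𝒟.Finite)
    (h : ∀ D ∈ 𝒟, IsNowhereDense D) : IsNowhereDense (⋃₀ 𝒟) := by
  induction 𝒟, h𝒟 using Set.Finite.induction_on with
  | empty => simp
  | insert _ _ ih =>
    rw [sUnion_insert]
    exact (h _ (mem_insert _ _)).union (ih fun D hD => h D (mem_insert_of_mem _ hD))

lemma IsDiscreteSubset.isNowhereDense [T1Space X] (hcrowded : ∀ x : X, ¬IsOpen ({x} : Set X))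
    {D : Set X} (hD : IsDiscreteSubset D) : IsNowhereDense D := by
  refine eq_empty_of_forall_notMem fun x hx => ?_
  obtain ⟨d, hdO, hdD⟩ := mem_closure_iff.1 (interior_subset hx) _ isOpen_interior hx
  obtain ⟨U, hUo, hUD⟩ := hD d hdD
  have hdU : d ∈ U := (hUD.superset rfl).1
  have hsub : interior (closure D) ∩ U ⊆ {d} := fun y hy => by
    simpa [hUD] using hUo.inter_closure ⟨hy.2, interior_subset hy.1⟩
  have hopen : interior (closure D) ∩ U = {d} :=
    Subset.antisymm hsub (singleton_subset_iff.2 ⟨hdO, hdU⟩)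
  exact hcrowded d (hopen ▸ isOpen_interior.inter hUo)

lemma dis_le_mk {𝒟 : Set (Set X)} (h𝒟 : ∀ D ∈ 𝒟, IsDiscreteSubset D)
    (hcover : ⋃₀ 𝒟 = Set.univ) : dis X ≤ #𝒟 :=
  csInf_le' ⟨𝒟, rfl, h𝒟, hcover⟩

lemma disStar_le_mk {𝒟 : Set (Set X)} (h𝒟 : ∀ D ∈ 𝒟, IsClosed D ∧ IsDiscreteSubset D)
    (hcover : ⋃₀ 𝒟 = Set.univ) : disStar X ≤ #𝒟 :=
  csInf_le' ⟨𝒟, rfl, h𝒟, hcover⟩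

variable (X) in
lemma exists_isDiscreteSubset_cover_mk_eq_dis :
    ∃ 𝒟 : Set (Set X), #𝒟 = dis X ∧ (∀ D ∈ 𝒟, IsDiscreteSubset D) ∧ ⋃₀ 𝒟 = Set.univ := by
  refine csInf_mem (s := {c | ∃ 𝒟 : Set (Set X), #𝒟 = c ∧ _ ∧ _})
    ⟨_, range singleton, rfl, forall_mem_range.2 isDiscreteSubset_singleton, ?_⟩
  rw [sUnion_range]
  exact iUnion_of_singleton X

variable (X) in
lemma exists_isClosed_isDiscreteSubset_cover_mk_eq_disStar [T1Space X] :
    ∃ 𝒟 : Set (Set X), #𝒟 = disStar X ∧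
      (∀ D ∈ 𝒟, IsClosed D ∧ IsDiscreteSubset D) ∧ ⋃₀ 𝒟 = Set.univ := by
  refine csInf_mem (s := {c | ∃ 𝒟 : Set (Set X), #𝒟 = c ∧ _ ∧ _})
    ⟨_, range singleton, rfl, forall_mem_range.2 fun x => ⟨isClosed_singleton,
      isDiscreteSubset_singleton x⟩, ?_⟩
  rw [sUnion_range]
  exact iUnion_of_singleton X

variable (X) in
lemma dis_le_disStar [T1Space X] : dis X ≤ disStar X := by
  obtain ⟨𝒟, hcard, h𝒟, hcover⟩ := exists_isClosed_isDiscreteSubset_cover_mk_eq_disStar X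
  exact hcard ▸ dis_le_mk (fun D hD => (h𝒟 D hD).2) hcover

lemma dis_eq_zero_of_isEmpty [IsEmpty X] : dis X = 0 := by
  have h := dis_le_mk (X := X) (𝒟 := ∅) (by simp)
    (sUnion_empty.trans (univ_eq_empty_iff.2 ‹_›).symm)
  rwa [mk_eq_zero, nonpos_iff_eq_zero] at h

lemma aleph0_le_dis [T1Space X] [Nonempty X] (hcrowded : ∀ x : X, ¬IsOpen ({x} : Set X)) :
    ℵ₀ ≤ dis X := by
  obtain ⟨𝒟, hcard, h𝒟, hcover⟩ := exists_isDiscreteSubset_cover_mk_eq_dis X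
  by_contra! hlt
  have hnd : IsNowhereDense (⋃₀ 𝒟) :=
    (lt_aleph0_iff_set_finite.1 (hcard ▸ hlt)).isNowhereDense_sUnion
      fun D hD => (h𝒟 D hD).isNowhereDense hcrowded
  rw [hcover, IsNowhereDense, closure_univ, interior_univ] at hnd
  exact univ_nonempty.ne_empty hnd

lemma disStar_le_dis_mul_aleph0 [T1Space X] (hnet : HasSigmaDiscreteNetwork X) :
    disStar X ≤ dis X * ℵ₀ := by
  obtain ⟨𝒟, hcard, h𝒟, hcover⟩ := exists_isDiscreteSubset_cover_mk_eq_dis X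
  choose F hF hFD using fun D : 𝒟 =>
    (h𝒟 D D.2).exists_iUnion_eq_of_hasSigmaDiscreteNetwork hnet
  have hcover' : ⋃₀ range (fun p : 𝒟 × ℕ => F p.1 p.2) = Set.univ := by
    rw [sUnion_range, ← hcover, sUnion_eq_iUnion, iUnion_prod']
    simp only [hFD]
  calc disStar X ≤ #(range fun p : 𝒟 × ℕ => F p.1 p.2) :=
        disStar_le_mk (forall_mem_range.2 fun p => hF p.1 p.2) hcover'
    _ ≤ #(𝒟 × ℕ) := mk_range_le
    _ = dis X * ℵ₀ := by rw [mk_prod, lift_uzero, mk_nat, lift_aleph0, hcard]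

end

/-- In a crowded σ-space, `dis X = disStar X`. -/
theorem statement4 (X : Type*) [TopologicalSpace X] [T2Space X]
    (hcrowded : ∀ x : X, ¬ IsOpen ({x} : Set X))
    (hnet : HasSigmaDiscreteNetwork X) :
    dis X = disStar X := by
  refine le_antisymm (dis_le_disStar X) ((disStar_le_dis_mul_aleph0 hnet).trans_eq ?_)
  rcases isEmpty_or_nonempty X with hX | hX
  · rw [dis_eq_zero_of_isEmpty, zero_mul]
  · exact mul_aleph0_eq (aleph0_le_dis hcrowded)
end

section
/- Let X be an ω₁-expandable crowded Baire space with dis*(X) ≤ κ for an infinite cardinal κ, and let A ⊆ X with |A| ≤ κ. Then the closure of A has cardinality at most κ. -/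
open Set Cardinal TopologicalSpace

/-- In an ω₁-expandable crowded Baire space with `disStar X ≤ κ`, closures of sets of size at
most `κ` have size at most `κ`. -/
theorem statement5 (X : Type*) [TopologicalSpace X] [T2Space X] [BaireSpace X]
    (hcrowded : ∀ x : X, ¬ IsOpen ({x} : Set X))
    (hexp : Expandable X (Cardinal.aleph 1))
    (κ : Cardinal) (hκ : Cardinal.aleph0 ≤ κ) (hdis : disStar X ≤ κ)
    (A : Set X) (hA : #A ≤ κ) :
    #(closure A) ≤ κ := by
  rcases (closure A).eq_empty_or_nonempty with hE | ⟨x0, hx0⟩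
  · rw [hE]; simp
  have hXne : Nonempty X := ⟨x0⟩
  -- Extract a covering family of closed discrete sets of cardinality `disStar X`.
  have hne : {c : Cardinal | ∃ 𝒟 : Set (Set X), #𝒟 = c ∧
      (∀ D ∈ 𝒟, IsClosed D ∧ IsDiscreteSubset D) ∧ ⋃₀ 𝒟 = Set.univ}.Nonempty := by
    refine ⟨#(Set.range fun x : X => ({x} : Set X)), Set.range fun x : X => ({x} : Set X),
      rfl, ?_, ?_⟩
    · rintro D ⟨x, rfl⟩
      refine ⟨isClosed_singleton, fun y hy => ⟨Set.univ, isOpen_univ, ?_⟩⟩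
      simp only [Set.mem_singleton_iff] at hy
      subst hy; simp
    · ext y
      simp only [Set.mem_sUnion, Set.mem_range, Set.mem_univ, iff_true]
      exact ⟨{y}, ⟨y, rfl⟩, rfl⟩
  obtain ⟨𝒟, h𝒟card, h𝒟prop, h𝒟cover⟩ := csInf_mem hne
  have h𝒟le : #𝒟 ≤ κ := h𝒟card ▸ hdis
  -- Expand each member of the family.
  choose U hU hUcount using fun D : 𝒟 => hexp D (h𝒟prop D D.2).1 (h𝒟prop D D.2).2
  -- Each point of the closure lies in some member of the family.
  have hxD : ∀ x : closure A, ∃ D : 𝒟, (x : X) ∈ (D : Set X) := by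
    intro x
    have hx : (x : X) ∈ ⋃₀ 𝒟 := by rw [h𝒟cover]; exact Set.mem_univ _
    obtain ⟨D, hD, hxD⟩ := hx
    exact ⟨⟨D, hD⟩, hxD⟩
  choose Dx hDx using hxD
  -- The expansion neighbourhood of each point of the closure meets `A`.
  have hxa : ∀ x : closure A, ∃ a : A, (a : X) ∈ U (Dx x) x := by
    intro x
    obtain ⟨hmem, hop⟩ := hU (Dx x) (x : X) (hDx x)
    obtain ⟨a, haU, haA⟩ := mem_closure_iff.mp x.2 _ hop hmem
    exact ⟨⟨a, haA⟩, haU⟩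
  choose ax hax using hxa
  set F : closure A → 𝒟 × A := fun x => (Dx x, ax x) with hF
  -- Fibers of `F` have size at most ℵ₁.
  have hfiber : ∀ p : 𝒟 × A, #{x : closure A // F x = p} ≤ Cardinal.aleph 1 := by
    rintro ⟨D, a⟩
    have hf : ∀ x : {x : closure A // F x = (D, a)},
        ((x : closure A) : X) ∈ (D : Set X) ∧ (a : X) ∈ U D ((x : closure A) : X) := by
      rintro ⟨x, hx⟩
      have h1 : Dx x = D := congrArg Prod.fst hx
      have h2 : ax x = a := congrArg Prod.snd hx
      have hm := hDx x
      have hu := hax x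
      rw [h1] at hm
      rw [h1, h2] at hu
      exact ⟨hm, hu⟩
    have hinj : Function.Injective
        (fun x : {x : closure A // F x = (D, a)} =>
          (⟨⟨((x : closure A) : X), (hf x).1⟩, (hf x).2⟩ :
            {d : (D : Set X) | (a : X) ∈ U D (d : X)})) := by
      rintro ⟨x, hx⟩ ⟨y, hy⟩ h
      have : ((x : X)) = ((y : X)) := congrArg (fun z => ((z : {d : (D : Set X) | (a : X) ∈ U D (d : X)}) : X)) h
      exact Subtype.ext (Subtype.ext this)
    exact le_trans (Cardinal.mk_le_of_injective hinj) (hUcount D a)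
  -- Counting: `#(closure A) ≤ #(𝒟 × A) * ℵ₁`.
  have key : #(closure A) ≤ #(𝒟 × A) * Cardinal.aleph 1 := by
    calc #(closure A) = #(Σ p : 𝒟 × A, {x : closure A // F x = p}) :=
          (Cardinal.mk_congr (Equiv.sigmaFiberEquiv F)).symm
      _ = Cardinal.sum (fun p : 𝒟 × A => #{x : closure A // F x = p}) := Cardinal.mk_sigma _
      _ ≤ Cardinal.sum (fun _ : 𝒟 × A => Cardinal.aleph 1) := Cardinal.sum_le_sum _ _ hfiber
      _ = #(𝒟 × A) * Cardinal.aleph 1 := Cardinal.sum_const' _ _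
  have hprod : #(𝒟 × A) ≤ κ := by
    rw [Cardinal.mk_prod, Cardinal.lift_id, Cardinal.lift_id]
    calc #𝒟 * #A ≤ κ * κ := mul_le_mul' h𝒟le hA
      _ = κ := Cardinal.mul_eq_self hκ
  rcases le_or_gt (Cardinal.aleph 1) κ with h1 | h1
  · calc #(closure A) ≤ #(𝒟 × A) * Cardinal.aleph 1 := key
      _ ≤ κ * κ := mul_le_mul' hprod h1
      _ = κ := Cardinal.mul_eq_self hκ
  · -- κ < ℵ₁: the family is countable, contradicting Baire.
    exfalso
    have hcnt : 𝒟.Countable := by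
      rw [Cardinal.countable_iff_lt_aleph_one]
      exact lt_of_le_of_lt h𝒟le h1
    have hdenseD : ∀ D ∈ 𝒟, Dense Dᶜ := by
      intro D hD
      rw [← interior_eq_empty_iff_dense_compl]
      by_contra hne'
      obtain ⟨y, hy⟩ := Set.nonempty_iff_ne_empty.mpr hne'
      have hyD : y ∈ D := interior_subset hy
      obtain ⟨V, hVo, hVD⟩ := (h𝒟prop D hD).2 y hyD
      have : V ∩ interior D = {y} := by
        apply Set.Subset.antisymm
        · intro z hz
          have : z ∈ V ∩ D := ⟨hz.1, interior_subset hz.2⟩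
          rw [hVD] at this; exact this
        · intro z hz
          rw [Set.mem_singleton_iff] at hz
          subst hz
          have hyV : z ∈ V ∩ D := by simp [hVD]
          exact ⟨hyV.1, hy⟩
      have : IsOpen ({y} : Set X) := this ▸ hVo.inter isOpen_interior
      exact hcrowded y this
    have hdense : Dense (⋂₀ (compl '' 𝒟)) := by
      apply dense_sInter_of_isOpen
      · rintro s ⟨D, hD, rfl⟩
        exact ((h𝒟prop D hD).1).isOpen_compl
      · exact hcnt.image _
      · rintro s ⟨D, hD, rfl⟩
        exact hdenseD D hD
    have hempty : (⋂₀ (compl '' 𝒟)) = (∅ : Set X) := by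
      rw [← Set.compl_sUnion, h𝒟cover, Set.compl_univ]
    rw [hempty] at hdense
    exact absurd hdense.nonempty (by simp)
end

section
/- For every infinite cardinal κ, there is a family F of functions from cf(κ) to κ with |F| = κ⁺ such that for any two distinct f, g ∈ F, the set {α < cf(κ) : f(α) = g(α)} has cardinality less than cf(κ). -/
/-!
Fix a cofinal subset of `κ` of order type `cf(κ)`, indexed by `α < cf(κ)` as `κ_α`. If at most
`κ` functions are enumerated by ordinals below `κ`, a new function can choose its value at `α`
outside the fewer than `κ` values taken there by functions with index below `κ_α`; each old
function has index below `κ_α` for all but fewer than `cf(κ)` coordinates, so it agrees with the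
new one on fewer than `cf(κ)` coordinates. A maximal almost disjoint family therefore has more
than `κ` members, by Zorn's lemma.
-/

open Cardinal Set

universe u

theorem exists_pairwise_mk_eq_succ {α : Type u} {r : α → α → Prop} [Std.Symm r]
    (κ : Cardinal.{u}) (hext : ∀ S : Set α, S.Pairwise r → #S ≤ κ → ∃ a ∉ S, ∀ b ∈ S, r a b) :
    ∃ F : Set α, #F = Order.succ κ ∧ F.Pairwise r := by
  obtain ⟨M, -, hM⟩ := zorn_subset_nonempty {S : Set α | S.Pairwise r}
    (fun c hc hchain _ => ⟨⋃₀ c, (pairwise_sUnion hchain.directedOn).2 hc,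
      fun _ => subset_sUnion_of_mem⟩) ∅ (pairwise_empty r)
  have hlarge : κ < #M := by
    by_contra! hsmall
    obtain ⟨a, haM, ha⟩ := hext M hM.prop hsmall
    exact haM (hM.mem_of_prop_insert (hM.prop.insert_of_symm fun b hb _ => ha b hb))
  obtain ⟨F, hFM, hF⟩ := le_mk_iff_exists_subset.1 (Order.succ_le_of_lt hlarge)
  exact ⟨F, hF, hM.prop.mono hFM⟩

-- `L i` consists of the points whose index in `κ` lies below the `i`-th element of a cofinal
-- subset of order type `cf(κ)`.
theorem exists_layering {κ : Cardinal.{u}} (hκ : ℵ₀ ≤ κ) {X ι : Type u} (hX : #X ≤ κ)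
    (hι : #ι = κ.ord.cof) :
    ∃ L : ι → Set X, (∀ i, #(L i) < κ) ∧ ∀ x, #{i | x ∉ L i} < #ι := by
  have := Cardinal.noMaxOrder hκ
  obtain ⟨s, hs, hstype⟩ := Ordinal.exists_ord_cof_eq κ.ord.ToType
  rw [Ordinal.cof_toType] at hstype
  have hsmk : #s = κ.ord.cof := by rw [← Ordinal.card_type (α := s) (· < ·), hstype, card_ord]
  obtain ⟨e⟩ : Nonempty (X ↪ κ.ord.ToType) := by rwa [← le_def, mk_toType, card_ord]
  obtain ⟨eι⟩ : Nonempty (ι ≃ s) := Cardinal.eq.1 (hι.trans hsmk.symm)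
  refine ⟨fun i => e ⁻¹' Iio (eι i : κ.ord.ToType), fun i => ?_, fun x => ?_⟩
  · calc #(e ⁻¹' Iio (eι i : κ.ord.ToType)) ≤ #(Iio (eι i : κ.ord.ToType)) :=
          mk_preimage_of_injective _ _ e.injective
      _ < κ := by simpa using mk_Iio_lt (eι i : κ.ord.ToType) (by simp)
  · obtain ⟨y, hy⟩ := exists_gt (e x)
    obtain ⟨t, hts, hyt⟩ := hs y
    have hsub : {i | x ∉ e ⁻¹' Iio (eι i : κ.ord.ToType)} ⊆ eι ⁻¹' Iio ⟨t, hts⟩ :=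
      fun i (hi : ¬ e x < eι i) => (not_lt.1 hi).trans_lt (hy.trans_le hyt)
    calc #{i | x ∉ e ⁻¹' Iio (eι i : κ.ord.ToType)} ≤ #(eι ⁻¹' Iio ⟨t, hts⟩) :=
          mk_le_mk_of_subset hsub
      _ ≤ #(Iio (⟨t, hts⟩ : s)) := mk_preimage_of_injective _ _ eι.injective
      _ < #s := mk_Iio_lt _ (by rw [hsmk, hstype])
      _ = #ι := hsmk.trans hι.symm

def AlmostDisjoint {ι β : Type*} (f g : ι → β) : Prop :=
  #{i | f i = g i} < #ι

instance {ι β : Type*} : Std.Symm (AlmostDisjoint (ι := ι) (β := β)) where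
  symm f g h := by simpa only [AlmostDisjoint, eq_comm] using h

theorem not_almostDisjoint_self {ι β : Type*} (f : ι → β) : ¬ AlmostDisjoint f f := by
  simp [AlmostDisjoint]

theorem exists_notMem_almostDisjoint {κ : Cardinal.{u}} (hκ : ℵ₀ ≤ κ) {ι β : Type u}
    (hι : #ι = κ.ord.cof) (hβ : κ ≤ #β) (G : Set (ι → β)) (hG : #G ≤ κ) :
    ∃ f ∉ G, ∀ g ∈ G, AlmostDisjoint f g := by
  obtain ⟨L, hL, hLx⟩ := exists_layering hκ hG hι
  choose f hf using fun i => compl_nonempty_of_mk_lt_mk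
    (mk_image_le.trans_lt ((hL i).trans_le hβ) : #((fun g : G => (g : ι → β) i) '' L i) < #β)
  have hfG : ∀ g ∈ G, AlmostDisjoint f g := fun g hg =>
    (mk_le_mk_of_subset fun i hi hgi => hf i ⟨⟨g, hg⟩, hgi, hi.symm⟩).trans_lt (hLx ⟨g, hg⟩)
  exact ⟨f, fun hf => not_almostDisjoint_self f (hfG f hf), hfG⟩

/-- For every infinite cardinal `κ` there is a family of `κ⁺` many functions from `cf(κ)`
to `κ` any two of which agree on fewer than `cf(κ)` coordinates. -/
theorem statement7 (κ : Cardinal) (hκ : Cardinal.aleph0 ≤ κ) :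
    ∃ F : Set (Quotient.out κ.ord.cof → Quotient.out κ),
      #F = Order.succ κ ∧
      ∀ f ∈ F, ∀ g ∈ F, f ≠ g → #{α | f α = g α} < κ.ord.cof := by
  obtain ⟨F, hF, hFdisj⟩ := exists_pairwise_mk_eq_succ (r := AlmostDisjoint) κ fun G _ hG =>
    exists_notMem_almostDisjoint hκ (mk_out _) (mk_out κ).ge G hG
  exact ⟨F, hF, fun f hf g hg hfg => by
    simpa only [AlmostDisjoint, mk_out] using hFdisj hf hg hfg⟩
end

section
/- For every infinite cardinal κ, there exists a family A of subsets of κ, each of cardinality cf(κ), such that |A| = κ⁺ and |A ∩ B| < cf(κ) for any two distinct A, B ∈ A. -/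
open Cardinal Ordinal Set

/-!
Let `λ = cf κ` and fix a cofinal subset `S` of `κ` of order type `λ`. For each `α < κ⁺` code
the predecessors of `α` injectively by ordinals `< κ`, and for `i ∈ S` let `f_α(i)` be the rank
of `α` for the relation "`β < α` and the code of `β` in `α` is below `i`". Fewer than `κ`
elements lie below `i`, so a regular cardinal `ν ≤ κ` bounds all these ranks and `f_α(i) < κ`.
If `β < α`, then `f_β(i) < f_α(i)` as soon as `i` exceeds the code of `β` in `α`, so `f_α` and
`f_β` agree on fewer than `λ` points. The graphs of the `f_α`, as subsets of `S × κ ≃ κ`, form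
the family.
-/

universe u

section Graph

variable {α β : Type u}

theorem Function.mk_graph (f : α → β) : #f.graph = #α :=
  mk_congr
    { toFun := fun p => p.1.1
      invFun := fun a => ⟨(a, f a), rfl⟩
      left_inv := fun ⟨(_, _), h⟩ => by subst h; rfl
      right_inv := fun _ => rfl }

theorem Function.mk_graph_inter_graph (f g : α → β) :
    #(f.graph ∩ g.graph : Set (α × β)) = #{a | f a = g a} :=
  mk_congr
    { toFun := fun p => ⟨p.1.1, p.2.1.trans p.2.2.symm⟩
      invFun := fun a => ⟨(a.1, f a.1), rfl, a.2.symm⟩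
      left_inv := fun ⟨(_, _), h, _⟩ => by subst h; rfl
      right_inv := fun _ => rfl }

theorem exists_almostDisjoint_of_pairwise_agree_lt {ι I Y X : Type u} (e : I × Y ↪ X)
    (F : ι → I → Y) (hF : Pairwise fun a b => #{i | F a i = F b i} < #I) :
    ∃ 𝒜 : Set (Set X), #𝒜 = #ι ∧ (∀ A ∈ 𝒜, #A = #I) ∧
      ∀ A ∈ 𝒜, ∀ B ∈ 𝒜, A ≠ B → #(A ∩ B : Set X) < #I := by
  have mk_graph_image (a) : #(e '' (F a).graph) = #I := by
    rw [mk_image_eq e.injective, Function.mk_graph]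
  have mk_inter (a b) :
      #(e '' (F a).graph ∩ e '' (F b).graph : Set X) = #{i | F a i = F b i} := by
    rw [← image_inter e.injective, mk_image_eq e.injective, Function.mk_graph_inter_graph]
  have hinj : Function.Injective fun a => e '' (F a).graph := by
    intro a b (hab : e '' (F a).graph = e '' (F b).graph)
    by_contra hne
    have : #{i | F a i = F b i} < #I := hF hne
    rw [← mk_inter, hab, inter_self, mk_graph_image] at this
    exact this.false
  refine ⟨range fun a => e '' (F a).graph, mk_range_eq _ hinj, ?_, ?_⟩
  · rintro _ ⟨a, rfl⟩
    exact mk_graph_image a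
  · rintro _ ⟨a, rfl⟩ _ ⟨b, rfl⟩ hab
    rw [mk_inter]
    exact hF fun h => hab (h ▸ rfl)

end Graph

theorem Cardinal.exists_isRegular_between {μ κ : Cardinal} (hκ : ℵ₀ ≤ κ) (h : μ < κ) :
    ∃ ν, ν.IsRegular ∧ μ < ν ∧ ν ≤ κ := by
  rcases lt_or_ge μ ℵ₀ with hμ | hμ
  · exact ⟨ℵ₀, isRegular_aleph0, hμ, hκ⟩
  · exact ⟨Order.succ μ, isRegular_succ hμ, Order.lt_succ_of_not_isMax (not_isMax μ),
      Order.succ_le_of_lt h⟩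

theorem IsWellFounded.rank_lt_ord_of_isRegular {α : Type u} {r : α → α → Prop}
    [IsWellFounded α r] {ν : Cardinal.{u}} (hν : ν.IsRegular) (h : ∀ a, #{b // r b a} < ν)
    (a : α) : rank r a < ν.ord := by
  induction a using IsWellFounded.induction r with
  | _ a IH =>
    rw [rank_eq]
    simp_rw [Order.succ_eq_add_one]
    exact iSup_add_one_lt_of_lt_cof (by rw [hν.cof_ord]; exact h a) fun b => IH b b.2

theorem exists_injOn_of_mk_le {α β : Type u} [Nonempty β] {s : Set α} (h : #s ≤ #β) :
    ∃ f : α → β, InjOn f s := by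
  classical
  obtain ⟨g⟩ := h
  refine ⟨fun a => if ha : a ∈ s then g ⟨a, ha⟩ else Classical.arbitrary β,
    fun a ha b hb hab => ?_⟩
  simp only [dif_pos ha, dif_pos hb] at hab
  exact congrArg Subtype.val (g.injective hab)

theorem mk_setOf_le_lt_of_isCofinal {Y : Type u} [LinearOrder Y] [WellFoundedLT Y]
    [NoMaxOrder Y] {S : Set Y} (hS : IsCofinal S) (hSord : (#S).ord = typeLT S) (y : Y) :
    #{i : S | (i : Y) ≤ y} < #S := by
  obtain ⟨z, hyz⟩ := exists_gt y
  obtain ⟨j, hjS, hzj⟩ := hS z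
  calc #{i : S | (i : Y) ≤ y} ≤ #(Iio (⟨j, hjS⟩ : S)) :=
        mk_le_mk_of_subset fun i hi => (show (i : Y) < j from (hi.trans_lt hyz).trans_le hzj)
    _ < #S := mk_Iio_lt _ hSord

section CodedBelow

variable {W Y : Type u} [LinearOrder W] [WellFoundedLT W]

def CodedBelow (code : W → W → Y) (Z : Set Y) (b a : W) : Prop :=
  b < a ∧ code a b ∈ Z

instance (code : W → W → Y) (Z : Set Y) : IsWellFounded W (CodedBelow code Z) :=
  ⟨Subrelation.wf And.left wellFounded_lt⟩

theorem rank_codedBelow_lt_ord {code : W → W → Y} (hcode : ∀ a, InjOn (code a) (Iio a))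
    {Z : Set Y} {ν : Cardinal.{u}} (hν : ν.IsRegular) (hZ : #Z < ν) (a : W) :
    IsWellFounded.rank (CodedBelow code Z) a < ν.ord := by
  refine IsWellFounded.rank_lt_ord_of_isRegular hν (fun a => lt_of_le_of_lt ?_ hZ) a
  exact mk_le_of_injective (f := fun b => ⟨code a b.1, b.2.2⟩)
    fun b c h => Subtype.ext (hcode a b.2.1 c.2.1 (congrArg Subtype.val h))

end CodedBelow

theorem exists_pairwise_agree_lt_cof (κ : Cardinal.{u}) (hκ : ℵ₀ ≤ κ) :
    ∃ (I : Type u) (F : (Order.succ κ).ord.ToType → I → κ.ord.ToType),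
      #I = κ.ord.cof ∧ Pairwise fun a b => #{i | F a i = F b i} < #I := by
  have := Cardinal.noMaxOrder hκ
  have : Nonempty κ.ord.ToType :=
    nonempty_toType_iff.2 (ord_eq_zero.not.2 (aleph0_pos.trans_le hκ).ne')
  obtain ⟨S, hS, hStype⟩ := exists_ord_cof_eq κ.ord.ToType
  rw [cof_toType] at hStype
  have hScard : #S = κ.ord.cof := by rw [← card_type (α := S) (· < ·), hStype, card_ord]
  have hcode (a : (Order.succ κ).ord.ToType) : ∃ c : _ → κ.ord.ToType, InjOn c (Iio a) := by
    refine exists_injOn_of_mk_le ?_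
    rw [mk_ord_toType, ← Order.lt_succ_iff]
    simpa using mk_Iio_lt a
  choose code hcode using hcode
  have hν (y : κ.ord.ToType) : ∃ ν, ν.IsRegular ∧ #(Iio y) < ν ∧ ν ≤ κ :=
    exists_isRegular_between hκ (by simpa using mk_Iio_lt y)
  choose ν hνreg hν hνκ using hν
  let r (i : S) := CodedBelow code (Iio i.1)
  have hrank (a) (i : S) : IsWellFounded.rank (r i) a < κ.ord :=
    (rank_codedBelow_lt_ord hcode (hνreg i) (hν i) a).trans_le (ord_le_ord.2 (hνκ i))
  refine ⟨S, fun a i => ToType.mk ⟨_, hrank a i⟩, hScard, ?_⟩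
  have hagree (a b) (hba : b < a) : #{i | (ToType.mk ⟨_, hrank a i⟩ : κ.ord.ToType) =
      ToType.mk ⟨_, hrank b i⟩} < #S := by
    refine lt_of_le_of_lt (mk_le_mk_of_subset fun i hi => ?_)
      (mk_setOf_le_lt_of_isCofinal hS (by rw [hScard, hStype]) (code a b))
    show (i : κ.ord.ToType) ≤ code a b
    by_contra! hlt
    exact (IsWellFounded.rank_lt_of_rel ⟨hba, hlt⟩ : _ < _).ne'
      (congrArg Subtype.val (ToType.mk.injective hi))
  intro a b hab
  rcases hab.lt_or_gt with h | h
  · simpa only [eq_comm] using hagree b a h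
  · exact hagree a b h

/-- For every infinite cardinal `κ` there is an almost disjoint family of `κ⁺` many subsets
of `κ`, each of size `cf(κ)`, with pairwise intersections of size less than `cf(κ)`. -/
theorem statement8 (κ : Cardinal) (hκ : Cardinal.aleph0 ≤ κ) :
    ∃ 𝒜 : Set (Set (Quotient.out κ)),
      #𝒜 = Order.succ κ ∧
      (∀ A ∈ 𝒜, #A = κ.ord.cof) ∧
      ∀ A ∈ 𝒜, ∀ B ∈ 𝒜, A ≠ B → #(A ∩ B : Set (Quotient.out κ)) < κ.ord.cof := by
  obtain ⟨I, F, hI, hF⟩ := exists_pairwise_agree_lt_cof κ hκ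
  have hprod : #(I × κ.ord.ToType) = #(Quotient.out κ) := by
    have hcof : κ.ord.cof ≠ 0 :=
      cof_eq_zero.not.2 (ord_eq_zero.not.2 (aleph0_pos.trans_le hκ).ne')
    rw [mk_prod, Cardinal.lift_id, Cardinal.lift_id, hI, mk_ord_toType, mk_out,
      mul_eq_right hκ (cof_ord_le κ) hcof]
  obtain ⟨e⟩ := Cardinal.eq.1 hprod
  obtain ⟨𝒜, h𝒜, hA, hAB⟩ := exists_almostDisjoint_of_pairwise_agree_lt e.toEmbedding F hF
  rw [hI] at hA hAB
  exact ⟨𝒜, by rw [h𝒜, mk_ord_toType], hA, hAB⟩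
end

section
/- Let C be a Polish space with a countable base {B_n : n ∈ ω} such that each B_n is homeomorphic to C. If C contains a Luzin set, then C contains a Luzin set that is dense and locally uncountable (every non-empty relatively open subset is uncountable). -/
open Set Cardinal TopologicalSpace

/-- A Luzin set: an uncountable set meeting every meagre set in a countable set. -/
def IsLuzin {C : Type*} [TopologicalSpace C] (L : Set C) : Prop :=
  Cardinal.aleph0 < #L ∧
  ∀ M : Set C, IsMeagre M → #(L ∩ M : Set C) ≤ Cardinal.aleph0

/-!
Transport a Luzin set `L₀` into each basic open set `B n` along a homeomorphism `C ≃ₜ B n`.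
Open embeddings pull meagre sets back to meagre sets, so each copy is again Luzin, and a
countable union of Luzin sets is Luzin. Every non-empty open set contains some `B n`, hence an
uncountable copy of `L₀`, which gives density and local uncountability at once.
-/

universe u

namespace IsLuzin

variable {X Y : Type u} [TopologicalSpace X] [TopologicalSpace Y]

theorem image_of_isOpenEmbedding {L : Set X} (hL : IsLuzin L) {f : X → Y}
    (hf : Topology.IsOpenEmbedding f) : IsLuzin (f '' L) := by
  refine ⟨(mk_image_eq hf.injective).symm ▸ hL.1, fun M hM => ?_⟩
  have hpre : IsMeagre (f ⁻¹' M) := hM.preimage_of_isOpenMap hf.continuous hf.isOpenMap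
  calc #(f '' L ∩ M : Set Y) = #(f '' (L ∩ f ⁻¹' M) : Set Y) := by rw [image_inter_preimage]
    _ ≤ #(L ∩ f ⁻¹' M : Set X) := mk_image_le
    _ ≤ ℵ₀ := hL.2 _ hpre

theorem iUnion {ι : Type*} [Countable ι] [Nonempty ι] {L : ι → Set X}
    (hL : ∀ i, IsLuzin (L i)) : IsLuzin (⋃ i, L i) := by
  refine ⟨(hL (Classical.arbitrary ι)).1.trans_le (mk_le_mk_of_subset (subset_iUnion L _)),
    fun M hM => ?_⟩
  rw [iUnion_inter, le_aleph0_iff_set_countable]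
  exact countable_iUnion fun i => le_aleph0_iff_set_countable.mp ((hL i).2 M hM)

end IsLuzin

section UncountableInOpen

variable {X : Type*} [TopologicalSpace X] {S : Set X}

theorem dense_of_aleph0_lt_mk_inter_isOpen
    (h : ∀ U : Set X, IsOpen U → U.Nonempty → ℵ₀ < #(S ∩ U : Set X)) : Dense S := by
  refine dense_iff_inter_open.mpr fun U hU hne => ?_
  rw [inter_comm, ← nonempty_coe_sort, ← mk_ne_zero_iff]
  exact (aleph0_pos.trans (h U hU hne)).ne'

theorem aleph0_lt_mk_of_isOpen_subtype
    (h : ∀ U : Set X, IsOpen U → U.Nonempty → ℵ₀ < #(S ∩ U : Set X))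
    {U : Set S} (hU : IsOpen U) (hne : U.Nonempty) : ℵ₀ < #U := by
  obtain ⟨V, hV, rfl⟩ := isOpen_induced_iff.mp hU
  obtain ⟨x, hx⟩ := hne
  have := h V hV ⟨x, hx⟩
  rwa [← Subtype.image_preimage_coe, mk_image_eq_of_injOn _ _ Subtype.val_injective.injOn] at this

end UncountableInOpen

theorem statement10_general (C : Type*) [TopologicalSpace C]
    (B : ℕ → Set C) (hbasis : TopologicalSpace.IsTopologicalBasis (Set.range B))
    (hhomeo : ∀ n, Nonempty (↥(B n) ≃ₜ C))
    (hL : ∃ L : Set C, IsLuzin L) :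
    ∃ L : Set C, IsLuzin L ∧ Dense L ∧
      ∀ U : Set ↥L, IsOpen U → U.Nonempty → Cardinal.aleph0 < #U := by
  obtain ⟨L₀, hL₀⟩ := hL
  let copy (n : ℕ) : Set C := Subtype.val '' ((hhomeo n).some.symm '' L₀)
  have hcopy_luzin (n : ℕ) : IsLuzin (copy n) :=
    (hL₀.image_of_isOpenEmbedding (hhomeo n).some.symm.isOpenEmbedding).image_of_isOpenEmbedding
      (hbasis.isOpen (mem_range_self n)).isOpenEmbedding_subtypeVal
  have hcopy_sub (n : ℕ) : copy n ⊆ B n := image_subset_iff.mpr fun x _ => x.2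
  have huncountable (U : Set C) (hU : IsOpen U) (hne : U.Nonempty) :
      ℵ₀ < #((⋃ n, copy n) ∩ U : Set C) := by
    obtain ⟨x, hx⟩ := hne
    obtain ⟨_, ⟨n, rfl⟩, -, hBU⟩ := hbasis.exists_subset_of_mem_open hx hU
    exact (hcopy_luzin n).1.trans_le <| mk_le_mk_of_subset <|
      subset_inter (subset_iUnion copy n) ((hcopy_sub n).trans hBU)
  exact ⟨⋃ n, copy n, IsLuzin.iUnion hcopy_luzin, dense_of_aleph0_lt_mk_inter_isOpen huncountable,
    fun U => aleph0_lt_mk_of_isOpen_subtype huncountable⟩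

/-- If a Polish space with a countable base of copies of itself contains a Luzin set, then it
contains a dense, locally uncountable Luzin set. -/
theorem statement10 (C : Type*) [TopologicalSpace C] [PolishSpace C]
    (B : ℕ → Set C) (hbasis : TopologicalSpace.IsTopologicalBasis (Set.range B))
    (hhomeo : ∀ n, Nonempty (↥(B n) ≃ₜ C))
    (hL : ∃ L : Set C, IsLuzin L) :
    ∃ L : Set C, IsLuzin L ∧ Dense L ∧
      ∀ U : Set ↥L, IsOpen U → U.Nonempty → Cardinal.aleph0 < #U :=
  statement10_general C B hbasis hhomeo hL
end

section
/- Every separable regular Hausdorff space in which every point is a G_δ has cardinality at most 𝔠 = 2^{ℵ₀}. -/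
/-!
In a regular space whose points are G_δ, every point is the intersection of countably many
closures of open sets, so `x ↦ (closure (V x n))ₙ` is injective. In a separable space with
countable dense `D`, the closure of an open `U` equals the closure of `U ∩ D`, so there are at
most `2 ^ ℵ₀ = 𝔠` such closures, and hence at most `𝔠 ^ ℵ₀ = 𝔠` points.
-/

open Set Cardinal TopologicalSpace

universe u

variable {X : Type u} [TopologicalSpace X]

theorem Dense.closure_inter_of_isOpen {D U : Set X} (hD : Dense D) (hU : IsOpen U) :
    closure (D ∩ U) = closure U :=
  subset_antisymm (closure_mono inter_subset_right) <|
    closure_minimal (inter_comm U D ▸ hD.open_subset_closure_inter hU) isClosed_closure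

theorem mk_closure_image_isOpen_le_continuum [SeparableSpace X] :
    #(closure '' {U : Set X | IsOpen U}) ≤ 𝔠 := by
  obtain ⟨D, hDc, hDd⟩ := exists_countable_dense X
  have hsub : closure '' {U : Set X | IsOpen U} ⊆ range fun S : Set D => closure ((↑) '' S) := by
    rintro _ ⟨U, hU, rfl⟩
    exact ⟨(↑) ⁻¹' U, by simp only [Subtype.image_preimage_coe, hDd.closure_inter_of_isOpen hU]⟩
  calc #(closure '' {U : Set X | IsOpen U})
      ≤ #(range fun S : Set D => closure ((↑) '' S)) := mk_le_mk_of_subset hsub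
    _ ≤ #(Set D) := mk_range_le
    _ = 2 ^ #D := mk_set
    _ ≤ 2 ^ ℵ₀ := power_le_power_left two_ne_zero (mk_le_aleph0_iff.2 hDc.to_subtype)
    _ = 𝔠 := two_power_aleph0

theorem exists_isOpen_iInter_closure_eq_singleton [RegularSpace X] {ι : Sort*} {x : X}
    {U : ι → Set X} (hU : ∀ i, IsOpen (U i)) (hx : ⋂ i, U i = {x}) :
    ∃ V : ι → Set X, (∀ i, IsOpen (V i)) ∧ ⋂ i, closure (V i) = {x} := by
  have hxU : ∀ i, x ∈ U i := mem_iInter.1 (hx ▸ mem_singleton x)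
  choose V hV hVU using fun i => (hasBasis_opens_closure x).mem_iff.1 ((hU i).mem_nhds (hxU i))
  refine ⟨V, fun i => (hV i).2, subset_antisymm ?_ ?_⟩
  · exact hx ▸ iInter_mono hVU
  · exact singleton_subset_iff.2 (mem_iInter.2 fun i => subset_closure (hV i).1)

theorem Cardinal.mk_nat_arrow_le_continuum {α : Type u} (h : #α ≤ 𝔠) : #(ℕ → α) ≤ 𝔠 :=
  calc #(ℕ → α) = #α ^ ℵ₀ := by rw [mk_arrow, mk_nat, lift_aleph0, lift_uzero]
    _ ≤ 𝔠 ^ ℵ₀ := power_le_power_right h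
    _ = 𝔠 := continuum_power_aleph0

theorem statement11_general (X : Type*) [TopologicalSpace X] [RegularSpace X]
    [TopologicalSpace.SeparableSpace X]
    (hGδ : ∀ x : X, ∃ f : ℕ → Set X, (∀ n, IsOpen (f n)) ∧ ({x} : Set X) = ⋂ n, f n) :
    #X ≤ Cardinal.continuum := by
  choose V hVo hV using fun x =>
    have ⟨f, hfo, hf⟩ := hGδ x
    exists_isOpen_iInter_closure_eq_singleton hfo hf.symm
  let F : X → ℕ → closure '' {U : Set X | IsOpen U} := fun x n =>
    ⟨closure (V x n), mem_image_of_mem _ (hVo x n)⟩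
  have hF : F.Injective := fun x y hxy => by
    have hclosure : ∀ n, closure (V x n) = closure (V y n) := fun n =>
      congrArg Subtype.val (congrFun hxy n)
    exact singleton_injective ((hV x).symm.trans ((iInter_congr hclosure).trans (hV y)))
  calc #X ≤ #(ℕ → closure '' {U : Set X | IsOpen U}) := mk_le_of_injective hF
    _ ≤ 𝔠 := mk_nat_arrow_le_continuum mk_closure_image_isOpen_le_continuum

/-- Every separable regular Hausdorff space with points G_δ has cardinality at most 𝔠. -/
theorem statement11 (X : Type*) [TopologicalSpace X] [T2Space X] [RegularSpace X]
    [TopologicalSpace.SeparableSpace X]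
    (hGδ : ∀ x : X, ∃ f : ℕ → Set X, (∀ n, IsOpen (f n)) ∧ ({x} : Set X) = ⋂ n, f n) :
    #X ≤ Cardinal.continuum :=
  statement11_general X hGδ
end

section
/- Let κ, λ be infinite cardinals with cf(κ) ≤ λ < κ. Let W = {-1} ∪ κ ordered with -1 below every ordinal, and let X = {f ∈ W^{λ⁺} : f has support bounded below λ⁺} (i.e., there is γ < λ⁺ with f(α) = 0 for all α ≥ γ), with the topology induced by the lexicographic order. Then X is the union of λ⁺ many discrete subspaces; i.e., dis(X) ≤ λ⁺. -/
/-!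
Cover `X` by the `λ⁺` sets `{f | supp f ≤ γ}`. Such an `f` is isolated in its set by the interval
between the two points obtained by setting `f γ` to `-1` and to `1`: a `g ≠ f` with support
`≤ γ` first differs from `f` at some coordinate below `γ`, where both endpoints still agree with
`f`, so both endpoints lie on the same side of `g`. The successor points exist because `λ⁺` has
no largest element and `κ > 1`.
-/

open Set Cardinal TopologicalSpace

open Ordinal

/-- The index set: the canonical well-order of order type `(λ⁺).ord`, i.e. the ordinals
below `λ⁺`. -/
abbrev LexIdx (lam : Cardinal.{0}) : Type := (Order.succ lam).ord.ToType

/-- The underlying set of the example: functions from `λ⁺` into `W = {-1} ∪ κ` (here `⊥`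
plays the role of `-1` and the ordinals `< κ.ord` play the role of the elements of `κ`,
with `0` the zero of `κ`) having bounded support, carrying the lexicographic order. -/
def LexFun (κ lam : Cardinal.{0}) : Set (Lex (LexIdx lam → WithBot Ordinal.{0})) :=
  {f | (∀ i, ofLex f i = ⊥ ∨ ∃ o : Ordinal, o < κ.ord ∧ ofLex f i = (o : WithBot Ordinal)) ∧
       ∃ γ : LexIdx lam, ∀ i, γ ≤ i → ofLex f i = ((0 : Ordinal) : WithBot Ordinal)}

/-- The space `X` of the example. -/
def LexSpace (κ lam : Cardinal.{0}) : Type 1 := ↥(LexFun κ lam)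

noncomputable instance (κ lam : Cardinal.{0}) : LinearOrder (LexSpace κ lam) :=
  inferInstanceAs (LinearOrder ↥(LexFun κ lam))

/-- `X` carries the topology induced by the lexicographic order. -/
noncomputable instance (κ lam : Cardinal.{0}) : TopologicalSpace (LexSpace κ lam) :=
  Preorder.topology _

instance (κ lam : Cardinal.{0}) : OrderTopology (LexSpace κ lam) := ⟨rfl⟩

open Function

namespace Pi

variable {ι β : Type*} [LinearOrder ι] [LinearOrder β]
  {f g : ι → β} {γ : ι}

theorem toLex_update_lt_of_lt_of_eqOn_Ici (hfg : EqOn f g (Ici γ))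
    (h : toLex f < toLex g) (b : β) : toLex (update f γ b) < toLex g := by
  obtain ⟨i, hbelow, hi⟩ := h
  have hiγ : i < γ := lt_of_not_ge fun hγi => hi.ne (hfg hγi)
  refine ⟨i, fun j hj => ?_, ?_⟩
  · simpa [update_of_ne (hj.trans hiγ).ne] using hbelow j hj
  · simpa [update_of_ne hiγ.ne] using hi

theorem lt_toLex_update_of_lt_of_eqOn_Ici (hfg : EqOn f g (Ici γ))
    (h : toLex g < toLex f) (a : β) : toLex g < toLex (update f γ a) := by
  obtain ⟨i, hbelow, hi⟩ := h
  have hiγ : i < γ := lt_of_not_ge fun hγi => hi.ne (hfg hγi).symm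
  refine ⟨i, fun j hj => ?_, ?_⟩
  · simpa [update_of_ne (hj.trans hiγ).ne] using hbelow j hj
  · simpa [update_of_ne hiγ.ne] using hi

theorem eq_of_mem_Ioo_toLex_update [WellFoundedLT ι] (hfg : EqOn f g (Ici γ)) {a b : β}
    (hg : toLex g ∈ Ioo (toLex (update f γ a)) (toLex (update f γ b))) : g = f := by
  rcases lt_trichotomy (toLex f) (toLex g) with hlt | heq | hgt
  · exact absurd hg.2 (toLex_update_lt_of_lt_of_eqOn_Ici hfg hlt b).not_gt
  · exact (toLex_inj.mp heq).symm
  · exact absurd hg.1 (lt_toLex_update_of_lt_of_eqOn_Ici hfg hgt a).not_gt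

end Pi

namespace LexSpace

variable {κ lam : Cardinal.{0}}

/-- `{f | supp f ≤ γ}`, the union of the paper's `D_α` for `α ≤ γ`. -/
def vanishingFrom (κ : Cardinal.{0}) (γ : LexIdx lam) : Set (LexSpace κ lam) :=
  {f | ∀ i, γ ≤ i → ofLex f.1 i = ((0 : Ordinal) : WithBot Ordinal)}

theorem iUnion_vanishingFrom : ⋃ γ : LexIdx lam, vanishingFrom κ γ = Set.univ :=
  eq_univ_of_forall fun f => mem_iUnion.2 f.2.2

theorem toLex_update_mem_lexFun (h0 : ℵ₀ ≤ lam) {γ : LexIdx lam} {f : LexSpace κ lam}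
    (hf : f ∈ vanishingFrom κ γ) {w : WithBot Ordinal}
    (hw : w = ⊥ ∨ ∃ o : Ordinal, o < κ.ord ∧ w = o) :
    toLex (update (ofLex f.1) γ w) ∈ LexFun κ lam := by
  have := Cardinal.noMaxOrder (h0.trans (Order.le_succ lam))
  obtain ⟨δ, hγδ⟩ := exists_gt γ
  refine ⟨fun i => ?_, δ, fun i hδi => ?_⟩
  · rcases eq_or_ne i γ with rfl | hiγ
    · simpa using hw
    · simpa [update_of_ne hiγ] using f.2.1 i
  · have hiγ : γ < i := hγδ.trans_le hδi
    simpa [update_of_ne hiγ.ne'] using hf i hiγ.le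

theorem isDiscreteSubset_vanishingFrom (h0 : ℵ₀ ≤ lam) (hκ : 1 < κ) (γ : LexIdx lam) :
    IsDiscreteSubset (vanishingFrom κ γ) := by
  intro f hf
  let below : LexSpace κ lam := ⟨_, toLex_update_mem_lexFun h0 hf (w := ⊥) (Or.inl rfl)⟩
  have h1κ : (1 : Ordinal) < κ.ord := by rwa [lt_ord, card_one]
  let above : LexSpace κ lam :=
    ⟨_, toLex_update_mem_lexFun h0 hf (w := (1 : Ordinal)) (Or.inr ⟨1, h1κ, rfl⟩)⟩
  refine ⟨Ioo below above, isOpen_Ioo, Subset.antisymm ?_ ?_⟩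
  · rintro g ⟨hg, hgγ⟩
    exact Subtype.ext (congrArg toLex (Pi.eq_of_mem_Ioo_toLex_update
      (fun i hi => (hf i hi).trans (hgγ i hi).symm) hg))
  · rintro g rfl
    refine ⟨⟨?_, ?_⟩, hf⟩
    · exact (Pi.toLex_update_lt_self_iff (x := ofLex g.1)).2
        (hf γ le_rfl ▸ WithBot.bot_lt_coe _)
    · exact (Pi.lt_toLex_update_self_iff (x := ofLex g.1)).2
        (hf γ le_rfl ▸ WithBot.coe_lt_coe.2 zero_lt_one)

end LexSpace

theorem statement13_general (κ lam : Cardinal.{0}) (h0 : Cardinal.aleph0 ≤ lam)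
    (hlt : lam < κ) :
    ∃ D : Quotient.out (Order.succ lam : Cardinal) → Set (LexSpace κ lam),
      (∀ i, IsDiscreteSubset (D i)) ∧ ⋃ i, D i = Set.univ := by
  obtain ⟨e⟩ : Nonempty (Quotient.out (Order.succ lam : Cardinal) ≃ LexIdx lam) :=
    Cardinal.eq.mp (by rw [mk_out, LexIdx, mk_ord_toType])
  have hκ : 1 < κ := one_lt_aleph0.trans_le (h0.trans hlt.le)
  refine ⟨fun i => LexSpace.vanishingFrom κ (e i),
    fun i => LexSpace.isDiscreteSubset_vanishingFrom h0 hκ (e i), ?_⟩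
  rw [e.surjective.iUnion_comp (LexSpace.vanishingFrom κ), LexSpace.iUnion_vanishingFrom]

/-- The space `X` is the union of `λ⁺` many discrete subspaces. -/
theorem statement13 (κ lam : Cardinal.{0}) (h0 : Cardinal.aleph0 ≤ lam)
    (hcf : κ.ord.cof ≤ lam) (hlt : lam < κ) :
    ∃ D : Quotient.out (Order.succ lam : Cardinal) → Set (LexSpace κ lam),
      (∀ i, IsDiscreteSubset (D i)) ∧ ⋃ i, D i = Set.univ :=
  statement13_general κ lam h0 hlt
end

section
/- With X as above (X = {f ∈ ({-1} ∪ κ)^{λ⁺} : supp(f) < λ⁺} with the lexicographic order topology, where cf(κ) ≤ λ < κ), the collection B = {[σ] : σ ∈ W^α for some α < λ⁺}, where [σ] = {f ∈ X : σ ⊆ f}, is a base of open sets for X such that any two members of B are either disjoint or one contains the other; hence X is non-archimedean. -/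
open Set Cardinal TopologicalSpace

open Ordinal

/-- The basic set `[σ]` determined by a string `σ = s ↾ (Iio γ)`: all elements of `X`
extending `σ`. -/
def lexCyl (κ lam : Cardinal.{0}) (γ : LexIdx lam) (s : LexIdx lam → WithBot Ordinal.{0}) :
    Set (LexSpace κ lam) :=
  {f | ∀ i, i < γ → ofLex f.1 i = s i}

/-- The collection `B = {[σ] : σ ∈ W^α, α < λ⁺}`. -/
def lexBase (κ lam : Cardinal.{0}) : Set (Set (LexSpace κ lam)) :=
  {B | ∃ (γ : LexIdx lam) (s : LexIdx lam → WithBot Ordinal.{0}),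
      (∀ i, i < γ → s i = ⊥ ∨ ∃ o : Ordinal, o < κ.ord ∧ s i = (o : WithBot Ordinal)) ∧
      B = lexCyl κ lam γ s}

/-!
A point `f` of `X` is eventually `0`, so lowering or raising one such coordinate (to `-1`, resp.
`1`) beyond a given `γ` produces neighbours `l < f < u` that agree with `f` below `γ`; everything in
`(l, u)` then agrees with `f` below `γ`, so the cylinders `[σ]` are open. Conversely, `a < f` is
witnessed at a single coordinate, so a long enough initial segment of `f` forces `a < g`; hence
the cylinders around `f` form a neighbourhood base. Two cylinders are nested or disjoint because
they are determined by initial segments.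
-/

namespace Pi.Lex

variable {ι : Type*} {β : ι → Type*}

theorem exists_forall_lt_of_eqOn_Iic [Preorder ι] [∀ i, Preorder (β i)] {a x : Lex (∀ i, β i)}
    (h : a < x) : ∃ i, ∀ g : Lex (∀ i, β i), (∀ j ≤ i, g j = x j) → a < g := by
  obtain ⟨i, hagree, hlt⟩ := h
  exact ⟨i, fun g hg => ⟨i, fun j hj => (hagree j hj).trans (hg j hj.le).symm,
    hlt.trans_eq (hg i le_rfl).symm⟩⟩

theorem exists_forall_gt_of_eqOn_Iic [Preorder ι] [∀ i, Preorder (β i)] {b x : Lex (∀ i, β i)}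
    (h : x < b) : ∃ i, ∀ g : Lex (∀ i, β i), (∀ j ≤ i, g j = x j) → g < b := by
  obtain ⟨i, hagree, hlt⟩ := h
  exact ⟨i, fun g hg => ⟨i, fun j hj => (hg j hj.le).trans (hagree j hj),
    (hg i le_rfl).trans_lt hlt⟩⟩

theorem eqOn_Iio_of_lt_of_lt [LinearOrder ι] [∀ i, Preorder (β i)] {x g y : Lex (∀ i, β i)}
    {δ : ι} (hxy : ∀ j < δ, x j = y j) (hxg : x < g) (hgy : g < y) : ∀ j < δ, g j = x j := by
  obtain ⟨i₁, hxg_eq, hxg_lt⟩ := hxg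
  obtain ⟨i₂, hgy_eq, hgy_lt⟩ := hgy
  intro j hj
  by_cases hji : j < i₁
  · exact (hxg_eq j hji).symm
  have hi₁ : i₁ < δ := lt_of_le_of_lt (not_lt.mp hji) hj
  exfalso
  rcases lt_trichotomy i₁ i₂ with h | rfl | h
  · exact (hxg_lt.trans_eq ((hgy_eq i₁ h).trans (hxy i₁ hi₁).symm)).false
  · exact (hxg_lt.trans (hgy_lt.trans_eq (hxy i₁ hi₁).symm)).false
  · exact (hgy_lt.trans_eq ((hxy i₂ (h.trans hi₁)).symm.trans (hxg_eq i₂ h))).false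

end Pi.Lex

section LexSpace

variable {κ lam : Cardinal.{0}}

theorem update_mem_lexFun [NoMaxOrder (LexIdx lam)] {f : Lex (LexIdx lam → WithBot Ordinal.{0})}
    (hf : f ∈ LexFun κ lam) (δ : LexIdx lam) {w : WithBot Ordinal.{0}}
    (hw : w = ⊥ ∨ ∃ o : Ordinal, o < κ.ord ∧ w = o) :
    toLex (Function.update (ofLex f) δ w) ∈ LexFun κ lam := by
  obtain ⟨hvals, γ₀, hγ₀⟩ := hf
  obtain ⟨δ', hδ'⟩ := exists_gt (max γ₀ δ)
  refine ⟨fun i => ?_, δ', fun i hi => ?_⟩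
  · rcases eq_or_ne i δ with rfl | hne
    · simpa using hw
    · simpa [Function.update_of_ne hne] using hvals i
  · have hne : i ≠ δ := ((le_max_right _ _).trans_lt (hδ'.trans_le hi)).ne'
    simpa [Function.update_of_ne hne] using hγ₀ i ((le_max_left _ _).trans (hδ'.le.trans hi))

theorem exists_lt_lt_eqOn_Iio [NoMaxOrder (LexIdx lam)] (hκ : 1 < κ.ord) (f : LexSpace κ lam)
    (γ : LexIdx lam) : ∃ l u : LexSpace κ lam, l < f ∧ f < u ∧
      ∀ i < γ, ofLex l.1 i = ofLex f.1 i ∧ ofLex u.1 i = ofLex f.1 i := by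
  obtain ⟨γ₀, hγ₀⟩ := f.2.2
  have hfδ : ofLex f.1 (max γ γ₀) = ((0 : Ordinal) : WithBot Ordinal) := hγ₀ _ (le_max_right _ _)
  refine ⟨⟨_, update_mem_lexFun f.2 (max γ γ₀) (Or.inl rfl)⟩,
    ⟨_, update_mem_lexFun f.2 (max γ γ₀) (Or.inr ⟨1, hκ, rfl⟩)⟩, ?_, ?_, fun i hi => ?_⟩
  · show toLex (Function.update (ofLex f.1) _ ⊥) < toLex (ofLex f.1)
    rw [Pi.toLex_update_lt_self_iff, hfδ]
    exact WithBot.bot_lt_coe _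
  · show toLex (ofLex f.1) < toLex (Function.update (ofLex f.1) _ _)
    rw [Pi.lt_toLex_update_self_iff, hfδ]
    exact WithBot.coe_lt_coe.mpr zero_lt_one
  · have hne : i ≠ max γ γ₀ := (hi.trans_le (le_max_left _ _)).ne
    simp [Function.update_of_ne hne]

theorem isOpen_lexCyl [NoMaxOrder (LexIdx lam)] (hκ : 1 < κ.ord) (γ : LexIdx lam)
    (s : LexIdx lam → WithBot Ordinal.{0}) : IsOpen (lexCyl κ lam γ s) := by
  have : OrderTopology (LexSpace κ lam) := ⟨rfl⟩
  refine isOpen_iff_forall_mem_open.mpr fun f hf => ?_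
  obtain ⟨l, u, hlf, hfu, hagree⟩ := exists_lt_lt_eqOn_Iio hκ f γ
  refine ⟨Ioo l u, fun g ⟨hlg, hgu⟩ i hi => ?_, isOpen_Ioo, hlf, hfu⟩
  have hgl := Pi.Lex.eqOn_Iio_of_lt_of_lt
    (fun j hj => (hagree j hj).1.trans (hagree j hj).2.symm) hlg hgu i hi
  exact hgl.trans ((hagree i hi).1.trans (hf i hi))

theorem exists_lexCyl_subset_of_mem_nhds [NoMaxOrder (LexIdx lam)] (hκ : 1 < κ.ord)
    {f : LexSpace κ lam} {u : Set (LexSpace κ lam)} (hu : u ∈ nhds f) :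
    ∃ γ, lexCyl κ lam γ (ofLex f.1) ⊆ u := by
  have : OrderTopology (LexSpace κ lam) := ⟨rfl⟩
  obtain ⟨l₀, u₀, hl₀, hu₀, -⟩ := exists_lt_lt_eqOn_Iio hκ f f.2.2.choose
  obtain ⟨l, r, ⟨hl, hr⟩, hsub⟩ := (mem_nhds_iff_exists_Ioo_subset' ⟨l₀, hl₀⟩ ⟨u₀, hu₀⟩).mp hu
  obtain ⟨i, hi⟩ := Pi.Lex.exists_forall_lt_of_eqOn_Iic hl
  obtain ⟨j, hj⟩ := Pi.Lex.exists_forall_gt_of_eqOn_Iic hr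
  obtain ⟨γ, hγ⟩ := exists_gt (max i j)
  exact ⟨γ, fun g hg => hsub ⟨hi g.1 fun k hk => hg k ((hk.trans (le_max_left _ _)).trans_lt hγ),
    hj g.1 fun k hk => hg k ((hk.trans (le_max_right _ _)).trans_lt hγ)⟩⟩

theorem lexCyl_subset_or_inter_eq_empty {γ δ : LexIdx lam} (hγδ : γ ≤ δ)
    (s t : LexIdx lam → WithBot Ordinal.{0}) :
    lexCyl κ lam δ t ⊆ lexCyl κ lam γ s ∨ lexCyl κ lam γ s ∩ lexCyl κ lam δ t = ∅ := by
  by_cases hst : ∀ i < γ, t i = s i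
  · exact Or.inl fun g hg i hi => (hg i (hi.trans_le hγδ)).trans (hst i hi)
  · push Not at hst
    obtain ⟨i, hi, hne⟩ := hst
    exact Or.inr <| eq_empty_of_forall_notMem fun g ⟨hs, ht⟩ =>
      hne ((ht i (hi.trans_le hγδ)).symm.trans (hs i hi))

end LexSpace

theorem statement14_general (κ lam : Cardinal.{0}) (h0 : Cardinal.aleph0 ≤ lam)
    (hlt : lam < κ) :
    TopologicalSpace.IsTopologicalBasis (lexBase κ lam) ∧
    ∀ A ∈ lexBase κ lam, ∀ B ∈ lexBase κ lam, A ∩ B = ∅ ∨ A ⊆ B ∨ B ⊆ A := by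
  have : NoMaxOrder (LexIdx lam) := Cardinal.noMaxOrder (h0.trans (Order.le_succ lam))
  have hκ : (1 : Ordinal) < κ.ord := by
    rw [Cardinal.lt_ord, Ordinal.card_one]
    exact one_lt_aleph0.trans_le (h0.trans hlt.le)
  refine ⟨isTopologicalBasis_of_isOpen_of_nhds ?_ ?_, ?_⟩
  · rintro _ ⟨γ, s, -, rfl⟩
    exact isOpen_lexCyl hκ γ s
  · intro f u hfu hu
    obtain ⟨γ, hγ⟩ := exists_lexCyl_subset_of_mem_nhds hκ (hu.mem_nhds hfu)
    exact ⟨_, ⟨γ, ofLex f.1, fun i _ => f.2.1 i, rfl⟩, fun _ _ => rfl, hγ⟩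
  · rintro _ ⟨γ, s, -, rfl⟩ _ ⟨δ, t, -, rfl⟩
    rcases le_total γ δ with h | h
    · exact (lexCyl_subset_or_inter_eq_empty h s t).elim (Or.inr ∘ Or.inr) Or.inl
    · exact (lexCyl_subset_or_inter_eq_empty h t s).elim (Or.inr ∘ Or.inl)
        fun h' => Or.inl ((inter_comm _ _).trans h')

/-- `lexBase` is a base of open sets for `X` any two members of which are disjoint or
comparable; hence `X` is non-archimedean. -/
theorem statement14 (κ lam : Cardinal.{0}) (h0 : Cardinal.aleph0 ≤ lam)
    (hcf : κ.ord.cof ≤ lam) (hlt : lam < κ) :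
    TopologicalSpace.IsTopologicalBasis (lexBase κ lam) ∧
    ∀ A ∈ lexBase κ lam, ∀ B ∈ lexBase κ lam, A ∩ B = ∅ ∨ A ⊆ B ∨ B ⊆ A :=
  statement14_general κ lam h0 hlt
end

section
/- With X as above (the lexicographic-order space of functions in ({-1} ∪ κ)^{λ⁺} with bounded support, cf(κ) ≤ λ < κ), player II has a winning strategy in the strong Choquet game on X; in particular X is a Baire space. -/
open Set Cardinal TopologicalSpace

open Ordinal

/-- Player II has a winning strategy in the strong Choquet game on `Y`: there is a strategy
`s` (assigning to each finite sequence of moves `(Bₘ, fₘ)` of player I an open set) such that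
for every play of I that is legal against `s` (i.e. `fₙ ∈ Bₙ` open and `Bₙ₊₁ ⊆ s(…,(Bₙ,fₙ))`),
the responses of `s` are legal (`fₙ ∈ s(…) ⊆ Bₙ` open) and `⋂ₙ s(…)` is nonempty. -/
def IIWinsStrongChoquet (Y : Type*) [TopologicalSpace Y] : Prop :=
  ∃ s : ∀ n : ℕ, (Fin (n + 1) → Set Y × Y) → Set Y,
    ∀ play : ℕ → Set Y × Y,
      (∀ n, IsOpen (play n).1 ∧ (play n).2 ∈ (play n).1) →
      (∀ n, (play (n + 1)).1 ⊆ s n (fun m => play m)) →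
      (∀ n, IsOpen (s n (fun m : Fin (n + 1) => play m)) ∧
            (play n).2 ∈ s n (fun m : Fin (n + 1) => play m) ∧
            s n (fun m : Fin (n + 1) => play m) ⊆ (play n).1) ∧
      (⋂ n, s n (fun m : Fin (n + 1) => play m)).Nonempty

/-!
Player II answers a move `(B, f)` by the open interval between `f⁻` and `f⁺`, the functions that
agree with `f` below a coordinate `α` past the support of `f`, take the value `-1` resp. `1` at
`α`, and vanish after `α`. For `α` large this interval lies inside `B`, and II takes the `αₙ`
strictly increasing, so that every later move `fₘ` agrees with `fₙ` below `αₙ`. As `λ⁺` has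
uncountable cofinality the `αₙ` are bounded, so the common extension `g` of these initial segments,
continued by `0`, is a point of `X`. Since `fₙ₊₁` vanishes from `αₙ₊₁` on, the first coordinate
where `fₙ₊₁` differs from `fₙ^±` is below `αₙ₊₁`, where `g` agrees with `fₙ₊₁`; hence `g` lies in
every interval. Letting player I move inside given dense open sets yields the Baire property.
-/

namespace Pi.Lex
variable {ι β : Type*} [LinearOrder ι] [LinearOrder β] {x y z : ι → β} {a : ι}

theorem lt_of_lt_of_eqOn_Ici_of_eqOn_Iio (hxy : toLex x < toLex y) (hxy' : EqOn x y (Ici a))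
    (hyz : EqOn y z (Iio a)) : toLex x < toLex z := by
  obtain ⟨i, hagree, hi⟩ := hxy
  have hia : i < a := lt_of_not_ge fun h => hi.ne (hxy' h)
  exact ⟨i, fun j hj => (hagree j hj).trans (hyz (hj.trans hia)), hi.trans_eq (hyz hia)⟩

theorem lt_of_lt_of_eqOn_Ici_of_eqOn_Iio' (hyx : toLex y < toLex x) (hxy' : EqOn x y (Ici a))
    (hyz : EqOn y z (Iio a)) : toLex z < toLex x := by
  obtain ⟨i, hagree, hi⟩ := hyx
  have hia : i < a := lt_of_not_ge fun h => hi.ne' (hxy' h)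
  exact ⟨i, fun j hj => (hyz (hj.trans hia)).symm.trans (hagree j hj),
    (hyz hia).symm.trans_lt hi⟩

theorem eqOn_Iio_of_lt_of_lt_s15 [WellFoundedLT ι] (hxy : toLex x < toLex y)
    (hyz : toLex y < toLex z) (hxz : EqOn x z (Iio a)) : EqOn y x (Iio a) := by
  by_contra hne
  obtain ⟨i, ⟨hia, hi⟩, hmin⟩ := wellFounded_lt.has_min {i | i < a ∧ y i ≠ x i}
    (by simpa [EqOn, Set.Nonempty] using hne)
  have hbelow : ∀ j < i, x j = y j := fun j hj =>
    not_not.1 fun h => hmin j ⟨hj.trans hia, Ne.symm h⟩ hj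
  have hxi := apply_le_of_toLex hxy.le hbelow
  have hzi := apply_le_of_toLex hyz.le fun j hj => (hbelow j hj).symm.trans (hxz (hj.trans hia))
  exact hi ((hzi.trans_eq (hxz hia).symm).antisymm hxi)

theorem exists_lt_of_eqOn_Iic (hxy : toLex x < toLex y) :
    ∃ i, ∀ z, EqOn y z (Iic i) → toLex x < toLex z := by
  obtain ⟨i, hagree, hi⟩ := hxy
  exact ⟨i, fun z hz =>
    ⟨i, fun j hj => (hagree j hj).trans (hz hj.le), hi.trans_eq (hz le_rfl)⟩⟩

theorem exists_gt_of_eqOn_Iic (hxy : toLex x < toLex y) :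
    ∃ i, ∀ z, EqOn x z (Iic i) → toLex z < toLex y := by
  obtain ⟨i, hagree, hi⟩ := hxy
  exact ⟨i, fun z hz =>
    ⟨i, fun j hj => (hz hj.le).symm.trans (hagree j hj), (hz le_rfl).symm.trans_lt hi⟩⟩

end Pi.Lex

theorem exists_forall_lt_of_aleph0_lt_cof {α : Type*} [LinearOrder α] (h : ℵ₀ < Order.cof α)
    (a : ℕ → α) : ∃ γ, ∀ n, a n < γ := by
  have : ¬ IsCofinal (range a) := fun hc =>
    not_le_of_gt h ((Order.cof_le hc).trans
      (Cardinal.le_aleph0_iff_set_countable.2 (countable_range a)))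
  obtain ⟨γ, hγ⟩ := not_isCofinal_iff.1 this
  exact ⟨γ, fun n => hγ _ ⟨n, rfl⟩⟩

theorem Set.eqOn_Iio_of_le_of_eqOn_succ {ι β : Type*} [Preorder ι] {F : ℕ → ι → β}
    {a : ℕ → ι} (ha : Monotone a) (hF : ∀ n, EqOn (F (n + 1)) (F n) (Iio (a n))) {m k : ℕ}
    (hmk : m ≤ k) :
    EqOn (F k) (F m) (Iio (a m)) := by
  induction k, hmk using Nat.le_induction with
  | base => exact eqOn_refl _ _
  | succ k hmk ih => exact fun i hi => (hF k (hi.trans_le (ha hmk))).trans (ih hi)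

namespace StrongChoquet

variable {Y : Type*} (s : ∀ n : ℕ, (Fin (n + 1) → Set Y × Y) → Set Y)

noncomputable def playInto [Nonempty Y] (V : Set Y) (U : ℕ → Set Y) : ℕ → Set Y × Y
  | 0 => (V ∩ U 0, Classical.epsilon (· ∈ V ∩ U 0))
  | n + 1 =>
    let B := (s n fun m => playInto V U m) ∩ U (n + 1)
    (B, Classical.epsilon (· ∈ B))

section
variable [Nonempty Y] (V : Set Y) (U : ℕ → Set Y)

theorem playInto_zero : playInto s V U 0 = (V ∩ U 0, Classical.epsilon (· ∈ V ∩ U 0)) := by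
  rw [playInto]

theorem playInto_succ (n : ℕ) :
    playInto s V U (n + 1) = ((s n fun m => playInto s V U m) ∩ U (n + 1),
      Classical.epsilon (· ∈ (s n fun m => playInto s V U m) ∩ U (n + 1))) := by
  rw [playInto]

end

variable [TopologicalSpace Y]

/-- `IIWinsStrongChoquet` constrains a strategy only along complete legal plays (so the empty
strategy satisfies it vacuously); the Baire property needs legal answers in every position. -/
def RespondsLegally : Prop :=
  ∀ n (h : Fin (n + 1) → Set Y × Y), IsOpen (h (Fin.last n)).1 →
    (h (Fin.last n)).2 ∈ (h (Fin.last n)).1 →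
    IsOpen (s n h) ∧ (h (Fin.last n)).2 ∈ s n h ∧ s n h ⊆ (h (Fin.last n)).1

def IsWinning : Prop :=
  ∀ play : ℕ → Set Y × Y, (∀ n, IsOpen (play n).1 ∧ (play n).2 ∈ (play n).1) →
    (∀ n, (play (n + 1)).1 ⊆ s n (fun m => play m)) →
    (⋂ n, s n (fun m : Fin (n + 1) => play m)).Nonempty

theorem iiWinsStrongChoquet (hs : RespondsLegally s) (hw : IsWinning s) :
    IIWinsStrongChoquet Y :=
  ⟨s, fun play hlegal hfollow =>
    ⟨fun n => hs n _ (hlegal n).1 (hlegal n).2, hw play hlegal hfollow⟩⟩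

theorem baireSpace (hs : RespondsLegally s) (hw : IsWinning s) : BaireSpace Y := by
  refine ⟨fun U hUo hUd => dense_iff_inter_open.2 fun V hV ⟨y, hy⟩ => ?_⟩
  have : Nonempty Y := ⟨y⟩
  have hlegal :
      ∀ n, IsOpen (playInto s V U n).1 ∧ (playInto s V U n).2 ∈ (playInto s V U n).1 := by
    intro n
    induction n with
    | zero =>
      rw [playInto_zero]
      exact ⟨hV.inter (hUo 0),
        Classical.epsilon_spec ((hUd 0).inter_open_nonempty V hV ⟨y, hy⟩)⟩
    | succ n ih =>
      obtain ⟨hA, hfA, -⟩ := hs n (fun m => playInto s V U m) ih.1 ih.2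
      rw [playInto_succ]
      exact ⟨hA.inter (hUo (n + 1)),
        Classical.epsilon_spec ((hUd (n + 1)).inter_open_nonempty _ hA ⟨_, hfA⟩)⟩
  obtain ⟨z, hz⟩ := hw _ hlegal fun n => by rw [playInto_succ]; exact inter_subset_left
  have hzB : ∀ n, z ∈ (playInto s V U n).1 := fun n =>
    (hs n (fun m => playInto s V U m) (hlegal n).1 (hlegal n).2).2.2 (mem_iInter.1 hz n)
  have hz0 := hzB 0
  rw [playInto_zero] at hz0
  refine ⟨z, hz0.1, mem_iInter.2 fun n => ?_⟩
  cases n with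
  | zero => exact hz0.2
  | succ n =>
    have hzn := hzB (n + 1)
    rw [playInto_succ] at hzn
    exact hzn.2

end StrongChoquet

theorem aleph0_lt_cof_lexIdx {lam : Cardinal.{0}} (h0 : ℵ₀ ≤ lam) :
    ℵ₀ < Order.cof (LexIdx lam) := by
  rw [cof_toType, (isRegular_succ h0).cof_ord]
  exact h0.trans_lt (Order.lt_succ lam)

instance {lam : Cardinal.{0}} [h0 : Fact (ℵ₀ ≤ lam)] : NoMaxOrder (LexIdx lam) :=
  Cardinal.noMaxOrder (h0.out.trans (Order.le_succ lam))

instance {lam : Cardinal.{0}} [h0 : Fact (ℵ₀ ≤ lam)] : Nonempty (LexIdx lam) := by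
  rw [nonempty_toType_iff, Ne, ord_eq_zero]
  exact ((aleph0_pos.trans_le h0.out).trans (Order.lt_succ lam)).ne'

namespace LexSpace

noncomputable section

variable {κ lam : Cardinal.{0}}

instance : OrderTopology (LexSpace κ lam) := ⟨rfl⟩

def toFun (x : LexSpace κ lam) : LexIdx lam → WithBot Ordinal := ofLex x.1

theorem lt_iff_toLex_lt {x y : LexSpace κ lam} : x < y ↔ toLex x.toFun < toLex y.toFun :=
  Iff.rfl

section

variable [Fact (ℵ₀ ≤ lam)] [Fact (1 < κ)]

theorem lt_ord_of_le_one {o : Ordinal} (ho : o ≤ 1) : o < κ.ord :=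
  ho.trans_lt (by simpa using ord_lt_ord.2 (Fact.out : 1 < κ))

def truncAt (x : LexSpace κ lam) (a : LexIdx lam) (c : WithBot Ordinal)
    (hc : c = ⊥ ∨ ∃ o : Ordinal, o < κ.ord ∧ c = o) : LexSpace κ lam :=
  ⟨toLex fun i => if i < a then x.toFun i else if i = a then c else 0, by
    refine ⟨fun i => ?_, ?_⟩
    · dsimp only [ofLex_toLex]
      split_ifs
      exacts [x.2.1 i, hc, Or.inr ⟨0, lt_ord_of_le_one zero_le_one, rfl⟩]
    · obtain ⟨b, hab⟩ := exists_gt a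
      exact ⟨b, fun i hi => by simp [(hab.trans_le hi).not_gt, (hab.trans_le hi).ne']⟩⟩

/-- The paper's `f⁻` (with `⊥` playing `-1`); `upperCut` is `f⁺`. -/
def lowerCut (x : LexSpace κ lam) (a : LexIdx lam) : LexSpace κ lam :=
  truncAt x a ⊥ (Or.inl rfl)

def upperCut (x : LexSpace κ lam) (a : LexIdx lam) : LexSpace κ lam :=
  truncAt x a 1 (Or.inr ⟨1, lt_ord_of_le_one le_rfl, rfl⟩)

variable {x : LexSpace κ lam} {a : LexIdx lam} {c : WithBot Ordinal}
  {hc : c = ⊥ ∨ ∃ o : Ordinal, o < κ.ord ∧ c = o}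

theorem eqOn_truncAt : EqOn (truncAt x a c hc).toFun x.toFun (Iio a) :=
  fun _ hi => if_pos hi

theorem toFun_truncAt_self : (truncAt x a c hc).toFun a = c := by
  simp [truncAt, toFun]

theorem toFun_truncAt_of_gt {i : LexIdx lam} (hi : a < i) : (truncAt x a c hc).toFun i = 0 := by
  simp [truncAt, toFun, hi.not_gt, hi.ne']

theorem truncAt_lt (hx : ∀ i, a ≤ i → x.toFun i = 0) (hc0 : c < 0) : truncAt x a c hc < x :=
  lt_iff_toLex_lt.2 ⟨a, fun _ hj => eqOn_truncAt (hc := hc) hj,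
    show (truncAt x a c hc).toFun a < x.toFun a by rwa [toFun_truncAt_self, hx a le_rfl]⟩

theorem lt_truncAt (hx : ∀ i, a ≤ i → x.toFun i = 0) (hc0 : 0 < c) : x < truncAt x a c hc :=
  lt_iff_toLex_lt.2 ⟨a, fun _ hj => (eqOn_truncAt (hc := hc) hj).symm,
    show x.toFun a < (truncAt x a c hc).toFun a by rwa [toFun_truncAt_self, hx a le_rfl]⟩

theorem eqOn_lowerCut : EqOn (lowerCut x a).toFun x.toFun (Iio a) := eqOn_truncAt

theorem eqOn_upperCut : EqOn (upperCut x a).toFun x.toFun (Iio a) := eqOn_truncAt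

theorem toFun_lowerCut_of_gt {i : LexIdx lam} (hi : a < i) : (lowerCut x a).toFun i = 0 :=
  toFun_truncAt_of_gt hi

theorem toFun_upperCut_of_gt {i : LexIdx lam} (hi : a < i) : (upperCut x a).toFun i = 0 :=
  toFun_truncAt_of_gt hi

theorem mem_Ioo_cut (hx : ∀ i, a ≤ i → x.toFun i = 0) :
    x ∈ Ioo (lowerCut x a) (upperCut x a) :=
  ⟨truncAt_lt hx (WithBot.bot_lt_coe _), lt_truncAt hx (by exact_mod_cast zero_lt_one)⟩

def IsGoodCut (B : Set (LexSpace κ lam)) (x : LexSpace κ lam) (a : LexIdx lam) : Prop :=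
  (∀ i, a ≤ i → x.toFun i = 0) ∧ Ioo (lowerCut x a) (upperCut x a) ⊆ B

theorem eventually_isGoodCut {B : Set (LexSpace κ lam)} (hB : IsOpen B) (hx : x ∈ B) :
    ∀ᶠ a in Filter.atTop, IsGoodCut B x a := by
  obtain ⟨γ, hγ⟩ := x.2.2
  obtain ⟨u, v, ⟨hu, hv⟩, huv⟩ := (mem_nhds_iff_exists_Ioo_subset'
    ⟨_, (mem_Ioo_cut hγ).1⟩ ⟨_, (mem_Ioo_cut hγ).2⟩).1 (hB.mem_nhds hx)
  obtain ⟨δ, hδ⟩ := Pi.Lex.exists_lt_of_eqOn_Iic (lt_iff_toLex_lt.1 hu)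
  obtain ⟨δ', hδ'⟩ := Pi.Lex.exists_gt_of_eqOn_Iic (lt_iff_toLex_lt.1 hv)
  filter_upwards [Filter.eventually_ge_atTop γ, Filter.eventually_gt_atTop δ,
    Filter.eventually_gt_atTop δ'] with a hγa hδa hδ'a
  refine ⟨fun i hi => hγ i (hγa.trans hi), fun y hy => huv ⟨?_, ?_⟩⟩
  · exact (lt_iff_toLex_lt.2 (hδ _ fun i hi => (eqOn_lowerCut (hi.trans_lt hδa)).symm)).trans
      hy.1
  · exact hy.2.trans
      (lt_iff_toLex_lt.2 (hδ' _ fun i hi => (eqOn_upperCut (hi.trans_lt hδ'a)).symm))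

theorem exists_forall_eqOn_Iio (f : ℕ → LexSpace κ lam) {a : ℕ → LexIdx lam}
    (ha : Monotone a) (hf : ∀ n, EqOn (f (n + 1)).toFun (f n).toFun (Iio (a n))) :
    ∃ g : LexSpace κ lam, ∀ n, EqOn g.toFun (f n).toFun (Iio (a n)) := by
  classical
  obtain ⟨γ, hγ⟩ := exists_forall_lt_of_aleph0_lt_cof (aleph0_lt_cof_lexIdx Fact.out) a
  let G : LexIdx lam → WithBot Ordinal := fun i =>
    if h : ∃ n, i < a n then (f (Nat.find h)).toFun i else 0
  refine ⟨⟨toLex G, fun i => ?_, γ, fun i hi => dif_neg ?_⟩, fun n i hi => ?_⟩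
  · change G i = ⊥ ∨ ∃ o < κ.ord, G i = o
    by_cases h : ∃ n, i < a n
    · rw [show G i = _ from dif_pos h]
      exact (f _).2.1 i
    · rw [show G i = 0 from dif_neg h]
      exact Or.inr ⟨0, lt_ord_of_le_one zero_le_one, rfl⟩
  · push Not
    exact fun n => (hγ n).le.trans hi
  · have h : ∃ n, i < a n := ⟨n, hi⟩
    change G i = _
    rw [show G i = _ from dif_pos h]
    exact (eqOn_Iio_of_le_of_eqOn_succ (F := fun n => (f n).toFun) ha hf (Nat.find_min' h hi)
      (Nat.find_spec h)).symm

theorem exists_forall_mem_Ioo_cut (f : ℕ → LexSpace κ lam) {a : ℕ → LexIdx lam}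
    (ha : StrictMono a) (hsupp : ∀ n i, a n ≤ i → (f n).toFun i = 0)
    (hf : ∀ n, f (n + 1) ∈ Ioo (lowerCut (f n) (a n)) (upperCut (f n) (a n))) :
    ∃ g, ∀ n, g ∈ Ioo (lowerCut (f n) (a n)) (upperCut (f n) (a n)) := by
  have hcoh : ∀ n, EqOn (f (n + 1)).toFun (f n).toFun (Iio (a n)) := fun n =>
    (Pi.Lex.eqOn_Iio_of_lt_of_lt_s15 (hf n).1 (hf n).2
      (eqOn_lowerCut.trans eqOn_upperCut.symm)).trans eqOn_lowerCut
  obtain ⟨g, hg⟩ := exists_forall_eqOn_Iio f ha.monotone hcoh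
  have hsucc : ∀ n, a n < a (n + 1) := fun n => ha n.lt_succ_self
  refine ⟨g, fun n => ⟨?_, ?_⟩⟩
  · refine Pi.Lex.lt_of_lt_of_eqOn_Ici_of_eqOn_Iio (hf n).1 (fun i hi => ?_) (hg (n + 1)).symm
    change (lowerCut (f n) (a n)).toFun i = (f (n + 1)).toFun i
    rw [toFun_lowerCut_of_gt ((hsucc n).trans_le hi), hsupp (n + 1) i hi]
  · refine Pi.Lex.lt_of_lt_of_eqOn_Ici_of_eqOn_Iio' (hf n).2 (fun i hi => ?_) (hg (n + 1)).symm
    change (upperCut (f n) (a n)).toFun i = (f (n + 1)).toFun i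
    rw [toFun_upperCut_of_gt ((hsucc n).trans_le hi), hsupp (n + 1) i hi]

open Classical in
def nextCut (p : Set (LexSpace κ lam) × LexSpace κ lam) (prev : LexIdx lam) : LexIdx lam :=
  if h : IsOpen p.1 ∧ p.2 ∈ p.1 then
    ((eventually_isGoodCut h.1 h.2).and (Filter.eventually_gt_atTop prev)).exists.choose
  else prev

theorem nextCut_spec {p : Set (LexSpace κ lam) × LexSpace κ lam} {prev : LexIdx lam}
    (hB : IsOpen p.1) (hx : p.2 ∈ p.1) :
    IsGoodCut p.1 p.2 (nextCut p prev) ∧ prev < nextCut p prev := by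
  rw [nextCut, dif_pos ⟨hB, hx⟩]
  exact ((eventually_isGoodCut hB hx).and (Filter.eventually_gt_atTop prev)).exists.choose_spec

def cutIndex :
    ∀ n : ℕ, (Fin (n + 1) → Set (LexSpace κ lam) × LexSpace κ lam) → LexIdx lam
  | 0, h => nextCut (h 0) (Classical.arbitrary _)
  | n + 1, h => nextCut (h (Fin.last _)) (cutIndex n (Fin.init h))

theorem isGoodCut_cutIndex (n : ℕ) (h : Fin (n + 1) → Set (LexSpace κ lam) × LexSpace κ lam)
    (hB : IsOpen (h (Fin.last n)).1) (hx : (h (Fin.last n)).2 ∈ (h (Fin.last n)).1) :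
    IsGoodCut (h (Fin.last n)).1 (h (Fin.last n)).2 (cutIndex n h) := by
  cases n <;> exact (nextCut_spec hB hx).1

theorem cutIndex_init_lt {n : ℕ} (h : Fin (n + 2) → Set (LexSpace κ lam) × LexSpace κ lam)
    (hB : IsOpen (h (Fin.last _)).1) (hx : (h (Fin.last _)).2 ∈ (h (Fin.last _)).1) :
    cutIndex n (Fin.init h) < cutIndex (n + 1) h :=
  (nextCut_spec hB hx).2

def strategy (n : ℕ) (h : Fin (n + 1) → Set (LexSpace κ lam) × LexSpace κ lam) :
    Set (LexSpace κ lam) :=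
  Ioo (lowerCut (h (Fin.last n)).2 (cutIndex n h)) (upperCut (h (Fin.last n)).2 (cutIndex n h))

theorem strategy_respondsLegally :
    StrongChoquet.RespondsLegally (strategy (κ := κ) (lam := lam)) :=
  fun n h hB hx =>
    have hgood := isGoodCut_cutIndex n h hB hx
    ⟨isOpen_Ioo, mem_Ioo_cut hgood.1, hgood.2⟩

theorem strategy_isWinning : StrongChoquet.IsWinning (strategy (κ := κ) (lam := lam)) := by
  intro play hlegal hfollow
  have ha : StrictMono fun n => cutIndex n fun m : Fin (n + 1) => play m :=
    strictMono_nat_of_lt_succ fun n =>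
      cutIndex_init_lt (fun m : Fin (n + 2) => play m) (hlegal (n + 1)).1 (hlegal (n + 1)).2
  obtain ⟨g, hg⟩ := exists_forall_mem_Ioo_cut (fun n => (play n).2) ha
    (fun n => (isGoodCut_cutIndex n _ (hlegal n).1 (hlegal n).2).1)
    (fun n => hfollow n (hlegal (n + 1)).2)
  exact ⟨g, mem_iInter.2 hg⟩

end

end

end LexSpace

theorem statement15_general (κ lam : Cardinal.{0}) (h0 : Cardinal.aleph0 ≤ lam)
    (hlt : lam < κ) :
    IIWinsStrongChoquet (LexSpace κ lam) ∧ BaireSpace (LexSpace κ lam) := by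
  have : Fact (ℵ₀ ≤ lam) := ⟨h0⟩
  have : Fact (1 < κ) := ⟨one_lt_aleph0.trans_le (h0.trans hlt.le)⟩
  exact ⟨StrongChoquet.iiWinsStrongChoquet _ LexSpace.strategy_respondsLegally
      LexSpace.strategy_isWinning,
    StrongChoquet.baireSpace _ LexSpace.strategy_respondsLegally LexSpace.strategy_isWinning⟩

/-- Player II has a winning strategy in the strong Choquet game on `X`; in particular `X`
is a Baire space. -/
theorem statement15 (κ lam : Cardinal.{0}) (h0 : Cardinal.aleph0 ≤ lam)
    (hcf : κ.ord.cof ≤ lam) (hlt : lam < κ) :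
    IIWinsStrongChoquet (LexSpace κ lam) ∧ BaireSpace (LexSpace κ lam) :=
  statement15_general κ lam h0 hlt
end

section
/- For every infinite cardinal λ and every cardinal κ with cf(κ) ≤ λ < κ, there is a Baire, non-archimedean (hence hereditarily paracompact) linearly ordered topological space X with dis(X) ≤ λ⁺ < κ ≤ Δ(X). In particular, the gap between dis(X) and Δ(X) for hereditarily paracompact Baire LOTS can be arbitrarily large. -/
open Set Cardinal TopologicalSpace

/-!
Take for `X` the functions `ω₁ → K ×ₗ ℤ` (with `#K = κ`) that are eventually equal to a fixed `c`,
ordered lexicographically. Because `K ×ₗ ℤ` has no endpoints, every cone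
`{y | y = x below δ}` is an order-convex set without endpoints, hence open, and these cones form a
basis of nested-or-disjoint sets. A strictly larger cone has a strictly smaller level, so maximal
cones exist and cut every open cover of every subspace into a disjoint one: `X` is hereditarily
paracompact. The points constant from `δ` on form a discrete set, so `dis X ≤ ℵ₁ ≤ λ⁺`; every cone
contains a copy of `K ×ₗ ℤ`, so `κ ≤ Δ X`. A decreasing sequence of cones has its levels bounded in
`ω₁`, so it has a common point, which makes `X` Baire. Finally `cf κ ≤ λ < κ` makes `κ` singular,
so it is not the regular cardinal `λ⁺`.
-/

open Topology

universe u v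

theorem exists_forall_lt_of_aleph0_lt_cof_s16 {I : Type u} [LinearOrder I]
    (hI : ℵ₀ < Order.cof I) (g : ℕ → I) : ∃ b, ∀ n, g n < b := by
  by_contra! h
  refine ((Order.cof_le (s := range g) fun a => ?_).trans (countable_range g).le_aleph0).not_gt hI
  obtain ⟨n, hn⟩ := h a
  exact ⟨g n, mem_range_self n, hn⟩

theorem succ_lt_of_cof_ord_le {κ lam : Cardinal} (h0 : ℵ₀ ≤ lam) (hcf : κ.ord.cof ≤ lam)
    (hlt : lam < κ) : Order.succ lam < κ := by
  refine (Order.succ_le_of_lt hlt).lt_of_ne ?_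
  rintro rfl
  rw [(isRegular_succ h0).cof_ord] at hcf
  exact (Order.lt_succ lam).not_ge hcf

section NestedBasis

variable {X : Type*} [TopologicalSpace X]

theorem locallyFinite_of_pairwise_disjoint_open_cover {ι : Type*} {t : ι → Set X}
    (ho : ∀ i, IsOpen (t i)) (hcov : ⋃ i, t i = Set.univ)
    (hd : Pairwise fun i j => Disjoint (t i) (t j)) :
    LocallyFinite t := by
  intro x
  obtain ⟨i, hi⟩ := mem_iUnion.1 (hcov ▸ mem_univ x)
  refine ⟨t i, (ho i).mem_nhds hi, (finite_singleton i).subset fun j ⟨y, hyj, hyi⟩ => ?_⟩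
  by_contra hji
  exact (hd hji).ne_of_mem hyj hyi rfl

theorem TopologicalSpace.IsTopologicalBasis.paracompactSpace_subtype_of_nested {B : Set (Set X)}
    (hB : IsTopologicalBasis B) (hnest : ∀ U ∈ B, ∀ V ∈ B, U ∩ V = ∅ ∨ U ⊆ V ∨ V ⊆ U)
    [WellFoundedGT B] (s : Set X) : ParacompactSpace s := by
  refine ⟨fun α u huo hcov => ?_⟩
  let G : Set B := {U | ∃ a, Subtype.val ⁻¹' U.1 ⊆ u a}
  have hcovG (x : s) : ∃ U ∈ G, x.1 ∈ U.1 := by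
    obtain ⟨a, ha⟩ := mem_iUnion.1 (hcov ▸ mem_univ x)
    obtain ⟨W, hWo, hWa⟩ := isOpen_induced_iff.1 (huo a)
    rw [← hWa] at ha
    obtain ⟨U, hUB, hxU, hUW⟩ := hB.exists_subset_of_mem_open ha hWo
    exact ⟨⟨U, hUB⟩, ⟨a, hWa ▸ preimage_mono hUW⟩, hxU⟩
  have hmax {U : B} (hU : U ∈ G) : ∃ M, U ≤ M ∧ Maximal (· ∈ G) M := by
    obtain ⟨M, hM⟩ := WellFoundedGT.exists_maximal inferInstance {M | M ∈ G ∧ U ≤ M} ⟨U, hU, le_rfl⟩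
    exact ⟨M, hM.prop.2, hM.prop.1, fun N hN hMN => hM.2 ⟨hN, hM.prop.2.trans hMN⟩ hMN⟩
  have hdisj {M N : B} (hM : Maximal (· ∈ G) M) (hN : Maximal (· ∈ G) N) (hne : M ≠ N) :
      M.1 ∩ N.1 = ∅ := by
    refine (hnest _ M.2 _ N.2).resolve_right fun h => hne ?_
    rcases h with h | h
    · exact le_antisymm h (hM.2 hN.prop h)
    · exact le_antisymm (hN.2 hM.prop h) h
  let t (M : {M : B // Maximal (· ∈ G) M}) : Set s := Subtype.val ⁻¹' M.1.1
  have hto M : IsOpen (t M) := isOpen_induced_iff.2 ⟨_, hB.isOpen M.1.2, rfl⟩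
  have htcov : ⋃ M, t M = Set.univ := by
    refine iUnion_eq_univ_iff.2 fun x => ?_
    obtain ⟨U, hUG, hxU⟩ := hcovG x
    obtain ⟨M, hUM, hM⟩ := hmax hUG
    exact ⟨⟨M, hM⟩, hUM hxU⟩
  refine ⟨_, t, hto, htcov, locallyFinite_of_pairwise_disjoint_open_cover hto htcov ?_,
    fun M => M.2.prop⟩
  intro M N hne
  rw [Set.disjoint_iff_inter_eq_empty, ← preimage_inter,
    hdisj M.2 N.2 fun h => hne (Subtype.ext h), preimage_empty]

end NestedBasis

def LexEventuallyConst (I : Type u) [Preorder I] {L : Type v} (c : L) : Type (max u v) :=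
  {f : Lex (I → L) // ∃ δ : I, ∀ j, δ ≤ j → ofLex f j = c}

namespace LexEventuallyConst

variable {I : Type u} [LinearOrder I] {L : Type v} {c : L}

instance : CoeFun (LexEventuallyConst I c) fun _ => I → L := ⟨fun x => ofLex x.1⟩

@[ext]
theorem ext {x y : LexEventuallyConst I c} (h : ∀ i, x i = y i) : x = y :=
  Subtype.ext (funext h)

instance [Nonempty I] : Nonempty (LexEventuallyConst I c) :=
  ⟨⟨toLex fun _ => c, Classical.arbitrary I, fun _ _ => rfl⟩⟩

theorem exists_ge_eq_const (x : LexEventuallyConst I c) (δ : I) : ∃ i, δ ≤ i ∧ x i = c := by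
  obtain ⟨ε, hε⟩ := x.2
  exact ⟨max δ ε, le_max_left _ _, hε _ (le_max_right _ _)⟩

def cone (x : LexEventuallyConst I c) (δ : I) : Set (LexEventuallyConst I c) :=
  {y | ∀ j < δ, y j = x j}

theorem mem_cone_self (x : LexEventuallyConst I c) (δ : I) : x ∈ cone x δ := fun _ _ => rfl

theorem cone_eq_of_mem {x y : LexEventuallyConst I c} {δ : I} (h : y ∈ cone x δ) :
    cone y δ = cone x δ := by
  ext z
  exact forall₂_congr fun j hj => by rw [h j hj]

theorem cone_anti (x : LexEventuallyConst I c) : Antitone (cone x) :=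
  fun _ _ hδε _ hy j hj => hy j (hj.trans_le hδε)

theorem cone_inter_eq_empty_or_subset (x y : LexEventuallyConst I c) (δ ε : I) :
    cone x δ ∩ cone y ε = ∅ ∨ cone x δ ⊆ cone y ε ∨ cone y ε ⊆ cone x δ := by
  refine (eq_empty_or_nonempty _).imp_right fun ⟨z, hzx, hzy⟩ => ?_
  rw [← cone_eq_of_mem hzx, ← cone_eq_of_mem hzy]
  exact (le_total δ ε).symm.imp (fun h => cone_anti z h) fun h => cone_anti z h

theorem lt_of_cone_ssubset {x y : LexEventuallyConst I c} {δ ε : I}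
    (h : cone y ε ⊂ cone x δ) : δ < ε := by
  by_contra! hεδ
  rw [← cone_eq_of_mem (h.subset (mem_cone_self y ε))] at h
  exact h.not_subset (cone_anti y hεδ)

variable (I c) in
def cones : Set (Set (LexEventuallyConst I c)) := {U | ∃ x δ, cone x δ = U}

theorem cones_nested : ∀ U ∈ cones I c, ∀ V ∈ cones I c, U ∩ V = ∅ ∨ U ⊆ V ∨ V ⊆ U := by
  rintro _ ⟨x, δ, rfl⟩ _ ⟨y, ε, rfl⟩
  exact cone_inter_eq_empty_or_subset x y δ ε

variable (I c) in
def constFrom (δ : I) : Set (LexEventuallyConst I c) := {x | ∀ j, δ ≤ j → x j = c}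

theorem nonempty_iInter_cone (x : ℕ → LexEventuallyConst I c) (δ : ℕ → I)
    (hanti : ∀ n, cone (x (n + 1)) (δ (n + 1)) ⊆ cone (x n) (δ n)) (hbdd : ∃ b, ∀ n, δ n < b) :
    (⋂ n, cone (x n) (δ n)).Nonempty := by
  classical
  have hmem {m n : ℕ} (h : m ≤ n) : x n ∈ cone (x m) (δ m) :=
    antitone_nat_of_succ_le (f := fun n => cone (x n) (δ n)) hanti h (mem_cone_self _ _)
  obtain ⟨b, hb⟩ := hbdd
  let g (i : I) : L := if h : ∃ n, i < δ n then x (Nat.find h) i else c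
  refine ⟨⟨toLex g, b, fun j hj => dif_neg ?_⟩, mem_iInter.2 fun n j hj => ?_⟩
  · rintro ⟨n, hn⟩
    exact (hn.trans (hb n)).not_ge hj
  · have h : ∃ n, j < δ n := ⟨n, hj⟩
    show g j = x n j
    simp only [g, dif_pos h]
    exact (hmem (Nat.find_min' h hj) j (Nat.find_spec h)).symm

section update

variable [NoMaxOrder I]

def update (x : LexEventuallyConst I c) (i : I) (v : L) : LexEventuallyConst I c :=
  ⟨toLex (Function.update x i v), by
    obtain ⟨ε, hε⟩ := x.2
    obtain ⟨δ, hδ⟩ := exists_gt (max i ε)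
    refine ⟨δ, fun j hj => ?_⟩
    have hji : j ≠ i := (lt_of_le_of_lt (le_max_left _ _) (hδ.trans_le hj)).ne'
    simp only [ofLex_toLex, Function.update_of_ne hji]
    exact hε j ((le_max_right _ _).trans (hδ.le.trans hj))⟩

@[simp]
theorem update_apply_self (x : LexEventuallyConst I c) (i : I) (v : L) : x.update i v i = v :=
  Function.update_self ..

theorem update_apply_of_ne (x : LexEventuallyConst I c) {i j : I} (v : L) (h : j ≠ i) :
    x.update i v j = x j :=
  Function.update_of_ne h ..

theorem update_mem_cone (x : LexEventuallyConst I c) {δ i : I} (v : L) (h : δ ≤ i) :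
    x.update i v ∈ cone x δ :=
  fun _ hj => x.update_apply_of_ne v (hj.trans_le h).ne

end update

variable [WellFoundedLT I]

instance : WellFoundedGT (cones I c) := by
  choose x δ hU using fun U : cones I c => U.2
  refine ⟨Subrelation.wf (fun {U V} hUV => ?_) (InvImage.wf δ wellFounded_lt)⟩
  rw [← Subtype.coe_lt_coe, ← hU, ← hU] at hUV
  exact lt_of_cone_ssubset hUV

variable [LinearOrder L]

noncomputable instance : LinearOrder (LexEventuallyConst I c) := Subtype.instLinearOrder _

noncomputable instance : TopologicalSpace (LexEventuallyConst I c) := Preorder.topology _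

instance : OrderTopology (LexEventuallyConst I c) := ⟨rfl⟩

theorem lt_iff {x y : LexEventuallyConst I c} :
    x < y ↔ ∃ i, (∀ j < i, x j = y j) ∧ x i < y i := Iff.rfl

theorem ordConnected_cone (x : LexEventuallyConst I c) (δ : I) : (cone x δ).OrdConnected := by
  refine ⟨fun a ha b hb z hz => ?_⟩
  obtain ⟨haz, hzb⟩ := hz
  show ∀ j < δ, z j = x j
  intro j
  induction j using WellFoundedLT.induction with
  | ind j ih =>
    intro hj
    have hlt : ∀ k < j, z k = x k := fun k hk => ih k hk (hk.trans hj)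
    rcases lt_trichotomy (z j) (x j) with h | h | h
    · refine absurd haz (not_le.2 (lt_iff.2 ⟨j, fun k hk => ?_, ?_⟩))
      · rw [hlt k hk, ha k (hk.trans hj)]
      · rwa [ha j hj]
    · exact h
    · refine absurd hzb (not_le.2 (lt_iff.2 ⟨j, fun k hk => ?_, ?_⟩))
      · rw [hlt k hk, hb k (hk.trans hj)]
      · rwa [hb j hj]

theorem exists_cone_subset_Ioi {p y : LexEventuallyConst I c} (h : p < y) :
    ∃ i, ∀ δ, i < δ → cone y δ ⊆ Ioi p := by
  obtain ⟨i, hag, hlt⟩ := lt_iff.1 h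
  refine ⟨i, fun δ hiδ z hz => lt_iff.2 ⟨i, fun j hj => ?_, ?_⟩⟩
  · rw [hag j hj, hz j (hj.trans hiδ)]
  · rwa [hz i hiδ]

theorem exists_cone_subset_Iio {q y : LexEventuallyConst I c} (h : y < q) :
    ∃ i, ∀ δ, i < δ → cone y δ ⊆ Iio q := by
  obtain ⟨i, hag, hlt⟩ := lt_iff.1 h
  refine ⟨i, fun δ hiδ z hz => lt_iff.2 ⟨i, fun j hj => ?_, ?_⟩⟩
  · rw [← hag j hj, hz j (hj.trans hiδ)]
  · rwa [hz i hiδ]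

variable [NoMaxOrder I]

theorem lt_update {x : LexEventuallyConst I c} {i : I} {v : L} (h : x i < v) : x < x.update i v :=
  lt_iff.2 ⟨i, fun _ hj => (x.update_apply_of_ne v hj.ne).symm, by rwa [update_apply_self]⟩

theorem update_lt {x : LexEventuallyConst I c} {i : I} {v : L} (h : v < x i) : x.update i v < x :=
  lt_iff.2 ⟨i, fun _ hj => x.update_apply_of_ne v hj.ne, by rwa [update_apply_self]⟩

instance [NoMinOrder L] : NoMinOrder (LexEventuallyConst I c) where
  exists_lt y := by
    obtain ⟨i, hi⟩ := y.2
    obtain ⟨v, hv⟩ := exists_lt c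
    exact ⟨y.update i v, update_lt (by rwa [show y i = c from hi i le_rfl])⟩

instance [NoMaxOrder L] : NoMaxOrder (LexEventuallyConst I c) where
  exists_gt y := by
    obtain ⟨i, hi⟩ := y.2
    obtain ⟨v, hv⟩ := exists_gt c
    exact ⟨y.update i v, lt_update (by rwa [show y i = c from hi i le_rfl])⟩

variable [NoMinOrder L] [NoMaxOrder L]

theorem isOpen_cone (x : LexEventuallyConst I c) (δ : I) : IsOpen (cone x δ) := by
  refine isOpen_iff_mem_nhds.2 fun y hy => ?_
  obtain ⟨i, hδi, hyi⟩ := y.exists_ge_eq_const δ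
  obtain ⟨v₁, hv₁⟩ := exists_lt c
  obtain ⟨v₂, hv₂⟩ := exists_gt c
  have hmem (v : L) : y.update i v ∈ cone x δ := by
    rw [← cone_eq_of_mem hy]
    exact y.update_mem_cone v hδi
  refine Filter.mem_of_superset (Ioo_mem_nhds (update_lt (by rwa [hyi])) (lt_update (by rwa [hyi])))
    (Ioo_subset_Icc_self.trans ((ordConnected_cone x δ).out (hmem v₁) (hmem v₂)))

theorem exists_cone_subset {y : LexEventuallyConst I c} {W : Set (LexEventuallyConst I c)}
    (hW : W ∈ 𝓝 y) : ∃ δ, cone y δ ⊆ W := by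
  obtain ⟨p, q, ⟨hpy, hyq⟩, hsub⟩ := mem_nhds_iff_exists_Ioo_subset.1 hW
  obtain ⟨i₁, hi₁⟩ := exists_cone_subset_Ioi hpy
  obtain ⟨i₂, hi₂⟩ := exists_cone_subset_Iio hyq
  obtain ⟨δ, hδ⟩ := exists_gt (max i₁ i₂)
  exact ⟨δ, fun z hz => hsub ⟨hi₁ δ (lt_of_le_of_lt (le_max_left _ _) hδ) hz,
    hi₂ δ (lt_of_le_of_lt (le_max_right _ _) hδ) hz⟩⟩

theorem isTopologicalBasis_cones : IsTopologicalBasis (cones I c) := by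
  refine isTopologicalBasis_of_isOpen_of_nhds ?_ fun y W hyW hW => ?_
  · rintro _ ⟨x, δ, rfl⟩
    exact isOpen_cone x δ
  · obtain ⟨δ, hδ⟩ := exists_cone_subset (hW.mem_nhds hyW)
    exact ⟨cone y δ, ⟨y, δ, rfl⟩, mem_cone_self y δ, hδ⟩

theorem isDiscreteSubset_constFrom (δ : I) : IsDiscreteSubset (constFrom I c δ) := by
  intro x hx
  refine ⟨cone x δ, isOpen_cone x δ,
    eq_singleton_iff_unique_mem.2 ⟨⟨mem_cone_self x δ, hx⟩, fun y ⟨hyx, hy⟩ => ext fun j => ?_⟩⟩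
  rcases lt_or_ge j δ with h | h
  · exact hyx j h
  · rw [hy j h, hx j h]

theorem dis_le : dis (LexEventuallyConst I c) ≤ lift.{v} #I := by
  calc dis (LexEventuallyConst I c) ≤ #(range (constFrom I c)) :=
        csInf_le' ⟨_, rfl, forall_mem_range.2 fun δ => isDiscreteSubset_constFrom δ,
          sUnion_range (constFrom I c) ▸ iUnion_eq_univ_iff.2 fun x => x.2⟩
    _ ≤ lift.{v} #I := by
      have := mk_range_le_lift (f := constFrom I c)
      rwa [lift_id'.{u, v}, lift_umax.{u, v}] at this

theorem lift_mk_le_mk_of_isOpen {U : Set (LexEventuallyConst I c)} (hU : IsOpen U)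
    (hne : U.Nonempty) : lift.{u} #L ≤ #U := by
  obtain ⟨y, hy⟩ := hne
  obtain ⟨δ, hδ⟩ := exists_cone_subset (hU.mem_nhds hy)
  have hinj : Function.Injective
      fun v : L => (⟨y.update δ v, hδ (y.update_mem_cone v le_rfl)⟩ : U) := fun v w h => by simpa only [update_apply_self] using congrArg (fun z : U => z.1 δ) h
  have := lift_mk_le_lift_mk_of_injective hinj
  rwa [lift_umax.{v, u}, lift_id'.{v, u}] at this

theorem lift_mk_le_Delta [Nonempty I] : lift.{u} #L ≤ Delta (LexEventuallyConst I c) := by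
  refine le_csInf ⟨_, univ, isOpen_univ, univ_nonempty, rfl⟩ ?_
  rintro _ ⟨U, hU, hne, rfl⟩
  exact lift_mk_le_mk_of_isOpen hU hne

theorem baireSpace (hI : ℵ₀ < Order.cof I) : BaireSpace (LexEventuallyConst I c) := by
  refine ⟨fun W hWo hWd => dense_iff_inter_open.2 fun V hVo ⟨x₀, hx₀⟩ => ?_⟩
  obtain ⟨δ₀, h₀⟩ := exists_cone_subset (hVo.mem_nhds hx₀)
  have step (n : ℕ) (p : LexEventuallyConst I c × I) :
      ∃ q : LexEventuallyConst I c × I, cone q.1 q.2 ⊆ W n ∩ cone p.1 p.2 := by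
    obtain ⟨z, hz⟩ := (hWd n).inter_open_nonempty _ (isOpen_cone p.1 p.2) ⟨p.1, mem_cone_self _ _⟩
    obtain ⟨ε, hε⟩ := exists_cone_subset (((isOpen_cone p.1 p.2).inter (hWo n)).mem_nhds hz)
    exact ⟨(z, ε), hε.trans (inter_comm _ _).subset⟩
  choose next hnext using step
  let seq (n : ℕ) : LexEventuallyConst I c × I := Nat.rec (x₀, δ₀) next n
  obtain ⟨y, hy⟩ := nonempty_iInter_cone (fun n => (seq n).1) (fun n => (seq n).2)
    (fun n => (hnext n (seq n)).trans inter_subset_right) (exists_forall_lt_of_aleph0_lt_cof_s16 hI _)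
  rw [mem_iInter] at hy
  exact ⟨y, h₀ (hy 0), mem_iInter.2 fun n => (hnext n (seq n) (hy (n + 1))).1⟩

end LexEventuallyConst

/-- For all infinite cardinals `λ, κ` with `cf(κ) ≤ λ < κ` there is a Baire, non-archimedean
(hence hereditarily paracompact) LOTS `X` with `dis X ≤ λ⁺ < κ ≤ Delta X`. -/
theorem statement16 (κ lam : Cardinal.{0}) (h0 : Cardinal.aleph0 ≤ lam)
    (hcf : κ.ord.cof ≤ lam) (hlt : lam < κ) :
    ∃ (X : Type 1) (lo : LinearOrder X) (t : TopologicalSpace X),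
      t = @Preorder.topology X lo.toPartialOrder.toPreorder ∧
      @BaireSpace X t ∧
      (∃ B : Set (Set X), @TopologicalSpace.IsTopologicalBasis X t B ∧
        ∀ U ∈ B, ∀ V ∈ B, U ∩ V = ∅ ∨ U ⊆ V ∨ V ⊆ U) ∧
      (∀ s : Set X, @ParacompactSpace ↥s (TopologicalSpace.induced Subtype.val t)) ∧
      @dis X t ≤ Cardinal.lift.{1} (Order.succ lam) ∧
      Order.succ lam < κ ∧
      Cardinal.lift.{1} κ ≤ @Delta X t := by
  let I := (ℵ₁ : Cardinal.{0}).ord.ToType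
  have : NoMaxOrder I := Cardinal.noMaxOrder (aleph0_le_aleph 1)
  have : Nonempty I := Ordinal.nonempty_toType_iff.2 (ord_eq_zero.not.2 (aleph_pos 1).ne')
  have hcof : ℵ₀ < Order.cof I := by
    rw [Ordinal.cof_toType, isRegular_aleph_one.cof_ord]
    exact aleph0_lt_aleph_one
  let K := (Cardinal.lift.{1} κ).ord.ToType
  have hK : #K = Cardinal.lift.{1} κ := by rw [mk_toType, card_ord]
  have : Nonempty K := mk_ne_zero_iff.1 <| hK ▸ lift_eq_zero.not.2 (h0.trans_lt hlt).ne_bot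
  let c : K ×ₗ ℤ := toLex (Classical.arbitrary K, 0)
  refine ⟨LexEventuallyConst I c, inferInstance, inferInstance, rfl,
    LexEventuallyConst.baireSpace hcof,
    ⟨_, LexEventuallyConst.isTopologicalBasis_cones, LexEventuallyConst.cones_nested⟩,
    LexEventuallyConst.isTopologicalBasis_cones.paracompactSpace_subtype_of_nested
      LexEventuallyConst.cones_nested, ?_, succ_lt_of_cof_ord_le h0 hcf hlt, ?_⟩
  · calc dis (LexEventuallyConst I c) ≤ lift.{1} #I := LexEventuallyConst.dis_le
      _ ≤ lift.{1} (Order.succ lam) := by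
        rw [lift_le, mk_toType, card_ord, ← succ_aleph0]
        exact Order.succ_le_succ h0
  · calc lift.{1} κ = #K := hK.symm
      _ ≤ #(K ×ₗ ℤ) := mk_le_of_injective (f := fun k => toLex (k, 0)) fun _ _ h => by simpa using h
      _ = lift.{0} #(K ×ₗ ℤ) := (lift_uzero _).symm
      _ ≤ Delta (LexEventuallyConst I c) := LexEventuallyConst.lift_mk_le_Delta
end

section
/- Every non-archimedean Hausdorff space is hereditarily paracompact. -/
open Set TopologicalSpace Filter Topology

/-
Given an open cover, let `𝒟` be the basic sets lying inside some member. Two points are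
equivalent when some set of `𝒟` contains both; laminarity makes this transitive. Fix a
representative `r z` of each class and a well-ordering of `Set X`, and send `z` to the least set
of `𝒟` containing both `z` and `r z`. This map is locally constant: the earlier sets containing
`r z` all miss `z`, and a basic neighbourhood of `z` avoiding `r z` (T1) can neither contain nor
lie inside any of them. Its fibres are thus a disjoint open refinement of the cover. A subspace
inherits a laminar base, so it is paracompact too.
-/

universe u

variable {X : Type u}

def IsLaminar (𝒟 : Set (Set X)) : Prop :=
  ∀ U ∈ 𝒟, ∀ V ∈ 𝒟, U ∩ V = ∅ ∨ U ⊆ V ∨ V ⊆ U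

theorem IsLaminar.mono {𝒟 ℬ : Set (Set X)} (h : IsLaminar ℬ) (h𝒟 : 𝒟 ⊆ ℬ) : IsLaminar 𝒟 :=
  fun U hU V hV => h U (h𝒟 hU) V (h𝒟 hV)

theorem IsLaminar.image_preimage {Y : Type*} {ℬ : Set (Set X)} (h : IsLaminar ℬ) (g : Y → X) :
    IsLaminar (preimage g '' ℬ) := by
  rintro _ ⟨U, hU, rfl⟩ _ ⟨V, hV, rfl⟩
  rcases h U hU V hV with h | h | h
  · exact Or.inl (by rw [← preimage_inter, h, preimage_empty])
  · exact Or.inr (Or.inl (preimage_mono h))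
  · exact Or.inr (Or.inr (preimage_mono h))

def IsLaminar.setoid {𝒟 : Set (Set X)} (h : IsLaminar 𝒟) (hcov : ⋃₀ 𝒟 = univ) : Setoid X where
  r x y := ∃ D ∈ 𝒟, x ∈ D ∧ y ∈ D
  iseqv :=
    { refl x := by
        obtain ⟨D, hD, hx⟩ := sUnion_eq_univ_iff.1 hcov x
        exact ⟨D, hD, hx, hx⟩
      symm := fun ⟨D, hD, hx, hy⟩ => ⟨D, hD, hy, hx⟩
      trans := by
        rintro x y z ⟨D, hD, hx, hy⟩ ⟨E, hE, hy', hz⟩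
        rcases h D hD E hE with hDE | hDE | hED
        · exact absurd (hDE ▸ mem_inter hy hy') (notMem_empty y)
        · exact ⟨E, hE, hDE hx, hz⟩
        · exact ⟨D, hD, hx, hED hz⟩ }

variable [TopologicalSpace X]

theorem ParacompactSpace.of_exists_isLocallyConstant {α : Type u}
    (h : ∀ (ι : Type u) (s : ι → Set X), (∀ i, IsOpen (s i)) → ⋃ i, s i = univ →
      ∃ f : X → α, IsLocallyConstant f ∧ ∀ x, ∃ i, {y | f y = f x} ⊆ s i) :
    ParacompactSpace X := by
  refine ⟨fun ι s hs hcov => ?_⟩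
  obtain ⟨f, hf, hfs⟩ := h ι s hs hcov
  refine ⟨range f, fun a => {y | f y = a}, fun a => hf.isOpen_fiber a,
    iUnion_eq_univ_iff.2 fun x => ⟨⟨f x, x, rfl⟩, rfl⟩, fun x => ?_, ?_⟩
  · refine ⟨_, (hf.isOpen_fiber (f x)).mem_nhds rfl, (finite_singleton ⟨f x, x, rfl⟩).subset ?_⟩
    rintro a ⟨y, hya, hy⟩
    exact Subtype.ext (hya.symm.trans hy)
  · rintro ⟨_, x, rfl⟩
    exact hfs x

namespace TopologicalSpace.IsTopologicalBasis

theorem compl_sUnion_mem_nhds [T1Space X] {ℬ 𝒞 : Set (Set X)}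
    (hℬ : IsTopologicalBasis ℬ) (hlam : IsLaminar ℬ) (h𝒞 : 𝒞 ⊆ ℬ) {a z : X}
    (ha : ∀ D ∈ 𝒞, a ∈ D) (hz : ∀ D ∈ 𝒞, z ∉ D) : (⋃₀ 𝒞)ᶜ ∈ 𝓝 z := by
  by_cases hza : z = a
  · subst hza
    rw [sUnion_eq_empty.2 fun D hD => absurd (ha D hD) (hz D hD), compl_empty]
    exact univ_mem
  obtain ⟨F, hF, hzF, hFa⟩ :=
    hℬ.exists_subset_of_mem_open (mem_compl_singleton_iff.2 hza) isOpen_compl_singleton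
  refine mem_of_superset (hℬ.isOpen hF |>.mem_nhds hzF) ?_
  rintro w hwF ⟨D, hD, hwD⟩
  rcases hlam F hF D (h𝒞 hD) with hFD | hFD | hDF
  · exact absurd (hFD ▸ mem_inter hwF hwD) (notMem_empty w)
  · exact hz D hD (hFD hzF)
  · exact hFa (hDF (ha D hD)) rfl

theorem exists_isLocallyConstant_of_isLaminar [T1Space X]
    {ℬ 𝒟 : Set (Set X)} (hℬ : IsTopologicalBasis ℬ) (hlam : IsLaminar ℬ) (h𝒟 : 𝒟 ⊆ ℬ)
    (hcov : ⋃₀ 𝒟 = univ) : ∃ f : X → Set X, IsLocallyConstant f ∧ ∀ x, x ∈ f x ∧ f x ∈ 𝒟 := by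
  let S := (hlam.mono h𝒟).setoid hcov
  let r : X → X := fun x => (Quotient.mk S x).out
  have hr : ∀ x, ∃ D ∈ 𝒟, r x ∈ D ∧ x ∈ D := fun x => Quotient.mk_out x
  have hr_eq : ∀ {x y D}, D ∈ 𝒟 → x ∈ D → y ∈ D → r x = r y := fun hD hx hy =>
    congrArg Quotient.out (Quotient.sound ⟨_, hD, hx, hy⟩)
  have wf : WellFounded (WellOrderingRel : Set X → Set X → Prop) := IsWellFounded.wf
  choose f hf hf_min using fun z =>
    wf.has_min {D | D ∈ 𝒟 ∧ r z ∈ D ∧ z ∈ D} (hr z)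
  refine ⟨f, (IsLocallyConstant.iff_eventually_eq f).2 fun z => ?_, fun x => ⟨(hf x).2.2, (hf x).1⟩⟩
  have hsmaller : (⋃₀ {D | D ∈ 𝒟 ∧ r z ∈ D ∧ WellOrderingRel D (f z)})ᶜ ∈ 𝓝 z :=
    hℬ.compl_sUnion_mem_nhds hlam (fun D hD => h𝒟 hD.1) (fun D hD => hD.2.1)
      fun D hD hzD => hf_min z D ⟨hD.1, hD.2.1, hzD⟩ hD.2.2
  filter_upwards [(hℬ.isOpen (h𝒟 (hf z).1)).mem_nhds (hf z).2.2, hsmaller] with w hw hw_min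
  have hrw : r w = r z := hr_eq (hf z).1 hw (hf z).2.2
  have hnot_gt : ¬WellOrderingRel (f z) (f w) := hf_min w (f z) ⟨(hf z).1, hrw ▸ (hf z).2.1, hw⟩
  have hnot_lt : ¬WellOrderingRel (f w) (f z) := fun hlt =>
    hw_min ⟨f w, ⟨(hf w).1, hrw ▸ (hf w).2.1, hlt⟩, (hf w).2.2⟩
  exact ((trichotomous_of WellOrderingRel (f w) (f z)).resolve_left hnot_lt).resolve_right hnot_gt

theorem paracompactSpace_of_isLaminar [T1Space X] {ℬ : Set (Set X)}
    (hℬ : IsTopologicalBasis ℬ) (hlam : IsLaminar ℬ) : ParacompactSpace X := by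
  refine ParacompactSpace.of_exists_isLocallyConstant (α := Set X) fun ι s hs hcov => ?_
  have h𝒟 : ⋃₀ {D ∈ ℬ | ∃ i, D ⊆ s i} = univ := by
    refine sUnion_eq_univ_iff.2 fun x => ?_
    obtain ⟨i, hi⟩ := mem_iUnion.1 (hcov ▸ mem_univ x)
    obtain ⟨D, hD, hxD, hDs⟩ := hℬ.exists_subset_of_mem_open hi (hs i)
    exact ⟨D, ⟨hD, i, hDs⟩, hxD⟩
  obtain ⟨f, hf, hfD⟩ := hℬ.exists_isLocallyConstant_of_isLaminar hlam (sep_subset _ _) h𝒟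
  refine ⟨f, hf, fun x => ?_⟩
  obtain ⟨i, hi⟩ := (hfD x).2.2
  exact ⟨i, fun y hy => hi (hy ▸ (hfD y).1)⟩

end TopologicalSpace.IsTopologicalBasis

/-- Every non-archimedean Hausdorff space (one with a base any two of whose members are
disjoint or comparable) is hereditarily paracompact. -/
theorem statement17 (X : Type*) [TopologicalSpace X] [T2Space X]
    (hna : ∃ B : Set (Set X), TopologicalSpace.IsTopologicalBasis B ∧
      ∀ U ∈ B, ∀ V ∈ B, U ∩ V = ∅ ∨ U ⊆ V ∨ V ⊆ U) :
    ∀ s : Set X, ParacompactSpace s := by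
  obtain ⟨ℬ, hℬ, hlam⟩ := hna
  intro s
  exact (isTopologicalBasis_subtype hℬ (· ∈ s)).paracompactSpace_of_isLaminar
    (IsLaminar.image_preimage hlam _)
end
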